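/- arXiv:2305.11043 — 2 statements merged into one kernel-verified Lean document; each statement's English description precedes it below -/
import Mathlib

section
/- Let F be a graph without isolated vertices with v vertices, ℓ edges, and minimum degree δ, and suppose wsat(v,F) = ℓ − 1. Let P be a nonempty subset of V(F) with |V(F) \ P| ≥ δ − 1, and let ℓ_P denote the number of edges of F with both endpoints in V(F) \ P. Then for every integer m ≥ 0, wsat(v + |P|·m, F) ≤ (ℓ − ℓ_P − 1)·m + ℓ − 1; consequently, there exists a constant C > 0 such that wsat(n,F) ≤ ((ℓ − ℓ_P − 1)/|P|)·n + C for all integers n ≥ v. -/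
open SimpleGraph

/-- One step of `F`-bootstrap percolation: `G'` is obtained from `G` by adding a single
missing edge that lies in a copy of `F` in `G'`. -/
def BootStep {α β : Type*} (F : SimpleGraph α) (G G' : SimpleGraph β) : Prop :=
  ∃ x y : β, x ≠ y ∧ ¬ G.Adj x y ∧ G' = G ⊔ SimpleGraph.fromEdgeSet {s(x, y)} ∧
    ∃ φ : F →g G', Function.Injective φ ∧ ∃ u w : α, F.Adj u w ∧ φ u = x ∧ φ w = y

/-- `H` is weakly `F`-saturated: some `F`-bootstrap percolation process leads from `H`
to the complete graph. -/
def WeaklySat {α β : Type*} (F : SimpleGraph α) (H : SimpleGraph β) : Prop :=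
  Relation.ReflTransGen (BootStep F) H ⊤

/-- The weak saturation number: minimum number of edges of a weakly `F`-saturated
graph on `n` vertices. -/
noncomputable def wsat {α : Type*} (F : SimpleGraph α) (n : ℕ) : ℕ :=
  sInf { m | ∃ H : SimpleGraph (Fin n), WeaklySat F H ∧ H.edgeSet.ncard = m }

/-- `eMin F i` : the minimum, over `i`-element vertex subsets `S`, of the number of edges of
`F` with at least one endpoint in `S`, minus 1 (and `0` for `i = 0`). -/
noncomputable def eMin {α : Type*} (F : SimpleGraph α) (i : ℕ) : ℕ :=
  if i = 0 then 0
  else sInf { m | ∃ S : Set α, S.ncard = i ∧ {e ∈ F.edgeSet | ∃ x ∈ S, x ∈ e}.ncard = m } - 1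

/-- `gstar F r i` : minimum of `e_{i₁} + … + e_{i_s}` over all decompositions
`i = i₁ + … + i_s` with `1 ≤ i_j ≤ v - r`. -/
noncomputable def gstar {α : Type*} [Fintype α] (F : SimpleGraph α) (r i : ℕ) : ℕ :=
  if i = 0 then 0
  else sInf { m | ∃ L : List ℕ, (∀ j ∈ L, 1 ≤ j ∧ j ≤ Fintype.card α - r) ∧
    L.sum = i ∧ (L.map (eMin F)).sum = m }

/-- The set `𝒦` of indices `i ∈ {1,…,v}` admitting no nontrivial decomposition
`i = i₁ + … + i_s` (`s ≥ 2`) with `e_i ≥ e_{i₁} + … + e_{i_s}`. -/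
noncomputable def Kset {α : Type*} [Fintype α] (F : SimpleGraph α) : Set ℕ :=
  { i | 1 ≤ i ∧ i ≤ Fintype.card α ∧
    ¬ ∃ L : List ℕ, 2 ≤ L.length ∧ (∀ j ∈ L, 1 ≤ j) ∧ L.sum = i ∧
      (L.map (eMin F)).sum ≤ eMin F i }

/-- `betaF F` : minimum number of vertices whose deletion leaves a graph with a cut-edge. -/
noncomputable def betaF {α : Type*} [Fintype α] (F : SimpleGraph α) : ℕ :=
  sInf { k | ∃ S : Set α, S.ncard = k ∧ ∃ e, (F.induce Sᶜ).IsBridge e }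

/-- A graph is 2-edge-connected if it stays connected after deleting at most one edge. -/
def TwoEdgeConnected {α : Type*} (F : SimpleGraph α) : Prop :=
  ∀ s : Set (Sym2 α), s.ncard ≤ 1 → (F.deleteEdges s).Connected


lemma adj_sup_edge {β : Type*} (G : SimpleGraph β) (x y a b : β) :
    (G ⊔ SimpleGraph.fromEdgeSet {s(x, y)}).Adj a b ↔
      G.Adj a b ∨ (s(a, b) = s(x, y) ∧ a ≠ b) := by
  simp [sup_adj, fromEdgeSet_adj]

lemma edge_le_of_adj {β : Type*} {G : SimpleGraph β} {x y : β} (h : G.Adj x y) :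
    SimpleGraph.fromEdgeSet {s(x, y)} ≤ G := by
  intro a b hab
  rw [fromEdgeSet_adj] at hab
  obtain ⟨he, hne⟩ := hab
  simp only [Set.mem_singleton_iff, Sym2.eq_iff] at he
  rcases he with ⟨rfl, rfl⟩ | ⟨rfl, rfl⟩
  · exact h
  · exact h.symm

/-- One boot step adding the edge `s(f q, f w)`, given an embedded near-copy of `F`. -/
lemma bootstep_of_embed {α β : Type*} (F : SimpleGraph α) (G : SimpleGraph β)
    (f : α → β) (hf : Function.Injective f) (q w : α) (hqw : F.Adj q w)
    (hnadj : ¬ G.Adj (f q) (f w))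
    (h1 : ∀ a b : α, a ≠ q → b ≠ q → F.Adj a b → G.Adj (f a) (f b))
    (h2 : ∀ a : α, F.Adj q a → a ≠ w → G.Adj (f q) (f a)) :
    BootStep F G (G ⊔ SimpleGraph.fromEdgeSet {s(f q, f w)}) := by
  refine ⟨f q, f w, fun h => F.ne_of_adj hqw (hf h), hnadj, rfl, ?_⟩
  have hadj : ∀ a b : α, F.Adj a b →
      (G ⊔ SimpleGraph.fromEdgeSet {s(f q, f w)}).Adj (f a) (f b) := by
    intro a b hab
    rw [adj_sup_edge]
    by_cases haq : a = q
    · subst haq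
      by_cases hbw : b = w
      · subst hbw
        exact Or.inr ⟨rfl, fun h => F.ne_of_adj hab (hf h)⟩
      · exact Or.inl (h2 b hab hbw)
    · by_cases hbq : b = q
      · subst hbq
        by_cases haw : a = w
        · subst haw
          exact Or.inr ⟨Sym2.eq_swap, fun h => F.ne_of_adj hab (hf h)⟩
        · exact Or.inl (h2 a hab.symm haw).symm
      · exact Or.inl (h1 a b haq hbq hab)
  exact ⟨⟨f, fun hab => hadj _ _ hab⟩, hf, q, w, hqw, rfl, rfl⟩

/-- Reach `G ⊔ {edge}` in at most one boot step. -/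
lemma rtg_add_edge {α β : Type*} (F : SimpleGraph α) (G : SimpleGraph β)
    (f : α → β) (hf : Function.Injective f) (q w : α) (hqw : F.Adj q w)
    (h1 : ∀ a b : α, a ≠ q → b ≠ q → F.Adj a b → G.Adj (f a) (f b))
    (h2 : ∀ a : α, F.Adj q a → a ≠ w → G.Adj (f q) (f a)) :
    Relation.ReflTransGen (BootStep F) G (G ⊔ SimpleGraph.fromEdgeSet {s(f q, f w)}) := by
  by_cases hadj : G.Adj (f q) (f w)
  · rw [sup_of_le_left (edge_le_of_adj hadj)]
  · exact Relation.ReflTransGen.single (bootstep_of_embed F G f hf q w hqw hadj h1 h2)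

/-- Transport of a percolation process along a graph embedding into a larger ambient graph. -/
lemma perc_map {α β γ : Type*} (F : SimpleGraph α) (ι : β ↪ γ) {H H' : SimpleGraph β}
    (h : Relation.ReflTransGen (BootStep F) H H') :
    ∀ G : SimpleGraph γ, SimpleGraph.map ι H ≤ G →
      Relation.ReflTransGen (BootStep F) G (G ⊔ SimpleGraph.map ι H') := by
  induction h with
  | refl => intro G hG; rw [sup_of_le_left hG]
  | @tail H₁ H₂ _ hstep ih =>
    intro G hG
    obtain ⟨x, y, hxy, hnadj, rfl, φ, hφinj, u, w, huw, hu, hw⟩ := hstep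
    have key : Relation.ReflTransGen (BootStep F) G (G ⊔ SimpleGraph.map ι H₁) := ih G hG
    have hH1le : SimpleGraph.map ι H₁ ≤ G ⊔ SimpleGraph.map ι H₁ := le_sup_right
    set G₁ := G ⊔ SimpleGraph.map ι H₁ with hG₁
    set E2 := SimpleGraph.fromEdgeSet {s(ι x, ι y)} with hE2
    have hmapeq : SimpleGraph.map ι (H₁ ⊔ SimpleGraph.fromEdgeSet {s(x, y)})
        = SimpleGraph.map ι H₁ ⊔ E2 := by
      apply le_antisymm
      · intro c d hcd
        rw [SimpleGraph.map_adj] at hcd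
        obtain ⟨a, b, hab, rfl, rfl⟩ := hcd
        rw [adj_sup_edge] at hab
        rcases hab with hab | ⟨he, hne⟩
        · exact Or.inl ((SimpleGraph.map_adj ι _ _ _).mpr ⟨a, b, hab, rfl, rfl⟩)
        · refine Or.inr ?_
          rw [hE2, fromEdgeSet_adj]
          constructor
          · simp only [Set.mem_singleton_iff, Sym2.eq_iff] at he ⊢
            rcases he with ⟨rfl, rfl⟩ | ⟨rfl, rfl⟩
            · exact Or.inl ⟨rfl, rfl⟩
            · exact Or.inr ⟨rfl, rfl⟩
          · exact fun h => hne (ι.injective h)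
      · apply sup_le
        · exact SimpleGraph.map_monotone ι le_sup_left
        · intro c d hcd
          rw [hE2, fromEdgeSet_adj] at hcd
          obtain ⟨he, hne⟩ := hcd
          have hxyadj : (H₁ ⊔ SimpleGraph.fromEdgeSet {s(x, y)}).Adj x y := by
            rw [adj_sup_edge]; exact Or.inr ⟨rfl, hxy⟩
          simp only [Set.mem_singleton_iff, Sym2.eq_iff] at he
          rw [SimpleGraph.map_adj]
          rcases he with ⟨rfl, rfl⟩ | ⟨rfl, rfl⟩
          · exact ⟨x, y, hxyadj, rfl, rfl⟩
          · exact ⟨y, x, hxyadj.symm, rfl, rfl⟩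
    rw [hmapeq, ← sup_assoc, ← hG₁]
    by_cases hGadj : G₁.Adj (ι x) (ι y)
    · rw [sup_of_le_left (edge_le_of_adj hGadj)]
      exact key
    · refine key.tail ?_
      have hle : SimpleGraph.map ι (H₁ ⊔ SimpleGraph.fromEdgeSet {s(x, y)}) ≤ G₁ ⊔ E2 := by
        rw [hmapeq]; exact sup_le (le_trans le_sup_right le_sup_left) le_sup_right
      refine ⟨ι x, ι y, fun h => hxy (ι.injective h), hGadj, rfl, ?_⟩
      refine ⟨⟨fun a => ι (φ a), ?_⟩, ι.injective.comp hφinj, u, w, huw, show ι (φ u) = ι x from by rw [hu],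
        show ι (φ w) = ι y from by rw [hw]⟩
      intro a b hab
      exact hle (by rw [SimpleGraph.map_adj]; exact ⟨φ a, φ b, φ.map_adj hab, rfl, rfl⟩)

section
variable {α β : Type*} [Fintype α] [DecidableEq α] [DecidableEq β]
variable (F : SimpleGraph α) [DecidableRel F.Adj]

/-- Attach one new edge from `z` to `y ∈ S`, where `S` is a clique, `z` has `δ-1`
neighbours in `S` avoiding `y`. -/
lemma rtg_attach_edge {v δ : ℕ} (hv : Fintype.card α = v)
    (q₀ : α) (hq₀ : (F.neighborFinset q₀).card = δ) (hδ : 1 ≤ δ)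
    (G : SimpleGraph β) (S T : Finset β) (z y : β)
    (hclique : ∀ a ∈ S, ∀ b ∈ S, a ≠ b → G.Adj a b)
    (hzS : z ∉ S) (hTS : T ⊆ S) (hT : ∀ t ∈ T, G.Adj z t) (hTcard : T.card = δ - 1)
    (hyS : y ∈ S) (hyT : y ∉ T) (hScard : v - 1 ≤ S.card) :
    Relation.ReflTransGen (BootStep F) G (G ⊔ SimpleGraph.fromEdgeSet {s(z, y)}) := by
  set N := F.neighborFinset q₀ with hN
  have hq₀N : q₀ ∉ N := SimpleGraph.notMem_neighborFinset_self F q₀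
  have hNne : N.Nonempty := Finset.card_pos.mp (by omega)
  obtain ⟨w, hwN⟩ := hNne
  have hwq₀ : w ≠ q₀ := fun h => hq₀N (h ▸ hwN)
  have hNe_card : (N.erase w).card = δ - 1 := by rw [Finset.card_erase_of_mem hwN, hq₀]
  have e₁ : {x // x ∈ N.erase w} ≃ {x // x ∈ T} :=
    Finset.equivOfCardEq (by rw [hNe_card, hTcard])
  set R := (Finset.univ : Finset α) \ insert q₀ N with hR
  have hRcard : R.card = v - 1 - δ := by
    rw [hR, Finset.card_sdiff_of_subset (Finset.subset_univ _), Finset.card_insert_of_notMem hq₀N,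
      Finset.card_univ, hv, hq₀]
    omega
  set S' := S \ insert y T with hS'
  have hS'card : S'.card = S.card - δ := by
    rw [hS', Finset.card_sdiff_of_subset (by
      intro t ht
      rcases Finset.mem_insert.mp ht with rfl | ht
      · exact hyS
      · exact hTS ht), Finset.card_insert_of_notMem hyT, hTcard]
    omega
  have hRS' : R.card ≤ S'.card := by
    have hvδ : δ + 1 ≤ v := by
      have : N ⊆ Finset.univ.erase q₀ := fun x hx =>
        Finset.mem_erase.mpr ⟨fun h => hq₀N (h ▸ hx), Finset.mem_univ x⟩
      have := Finset.card_le_card this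
      rw [hq₀, Finset.card_erase_of_mem (Finset.mem_univ q₀), Finset.card_univ, hv] at this
      omega
    omega
  obtain ⟨S'', hS''sub, hS''card⟩ := Finset.exists_subset_card_eq hRS'
  have e₂ : {x // x ∈ R} ≃ {x // x ∈ S''} := Finset.equivOfCardEq hS''card.symm
  -- the embedding of F
  have hmemR : ∀ a : α, a ≠ q₀ → a ≠ w → a ∉ N.erase w → a ∈ R := by
    intro a h1 h2 h3
    rw [hR, Finset.mem_sdiff]
    refine ⟨Finset.mem_univ a, fun h => ?_⟩
    rcases Finset.mem_insert.mp h with rfl | h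
    · exact h1 rfl
    · exact h3 (Finset.mem_erase.mpr ⟨h2, h⟩)
  classical
  set f : α → β := fun a =>
    if hq : a = q₀ then z
    else if hw : a = w then y
    else if hn : a ∈ N.erase w then (e₁ ⟨a, hn⟩ : β)
    else (e₂ ⟨a, hmemR a hq hw hn⟩ : β) with hf
  have hfeq : ∀ a : α, f a = if hq : a = q₀ then z
      else if hw : a = w then y
      else if hn : a ∈ N.erase w then (e₁ ⟨a, hn⟩ : β)
      else (e₂ ⟨a, hmemR a hq hw hn⟩ : β) := fun a => by rw [hf]
  have hfq₀ : f q₀ = z := by rw [hfeq, dif_pos rfl]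
  have hfw : f w = y := by rw [hfeq, dif_neg hwq₀, dif_pos rfl]
  have hfT : ∀ a (h : a ∈ N.erase w), (f a = (e₁ ⟨a, h⟩ : β)) ∧ f a ∈ T := by
    intro a h
    have h1 : a ≠ q₀ := fun hh => hq₀N (hh ▸ (Finset.mem_erase.mp h).2)
    have h2 : a ≠ w := (Finset.mem_erase.mp h).1
    have he : f a = (e₁ ⟨a, h⟩ : β) := by rw [hfeq, dif_neg h1, dif_neg h2, dif_pos h]
    exact ⟨he, he ▸ (e₁ ⟨a, h⟩).2⟩
  have hfS'' : ∀ a (h1 : a ≠ q₀) (h2 : a ≠ w) (h3 : a ∉ N.erase w),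
      (f a = (e₂ ⟨a, hmemR a h1 h2 h3⟩ : β)) ∧ f a ∈ S'' := by
    intro a h1 h2 h3
    have he : f a = (e₂ ⟨a, hmemR a h1 h2 h3⟩ : β) := by
      rw [hfeq, dif_neg h1, dif_neg h2, dif_neg h3]
    exact ⟨he, he ▸ (e₂ ⟨a, hmemR a h1 h2 h3⟩).2⟩
  -- membership facts
  have hS''S : S'' ⊆ S := hS''sub.trans (Finset.sdiff_subset)
  have hyS'' : y ∉ S'' := fun h =>
    (Finset.mem_sdiff.mp (hS''sub h)).2 (Finset.mem_insert_self y T)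
  have hTS'' : ∀ t, t ∈ T → t ∉ S'' := fun t ht h =>
    (Finset.mem_sdiff.mp (hS''sub h)).2 (Finset.mem_insert_of_mem ht)
  have hzT : z ∉ T := fun h => hzS (hTS h)
  have hzS'' : z ∉ S'' := fun h => hzS (hS''S h)
  have hzy : z ≠ y := fun h => hzS (h ▸ hyS)
  have hfS : ∀ a : α, a ≠ q₀ → f a ∈ S := by
    intro a h1
    by_cases h2 : a = w
    · subst h2; rw [hfw]; exact hyS
    · by_cases h3 : a ∈ N.erase w
      · exact hTS (hfT a h3).2
      · exact hS''S (hfS'' a h1 h2 h3).2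
  have hcases : ∀ a : α, a = q₀ ∨ a = w ∨ a ∈ N.erase w ∨
      (a ≠ q₀ ∧ a ≠ w ∧ a ∉ N.erase w) := by tauto
  have hfinj : Function.Injective f := by
    intro a b hab
    rcases hcases a with rfl | rfl | ha | ⟨ha1, ha2, ha3⟩ <;>
      rcases hcases b with rfl | rfl | hb | ⟨hb1, hb2, hb3⟩
    · rfl
    · exact absurd (hfq₀ ▸ hfw ▸ hab) hzy
    · exact absurd (hfq₀ ▸ hab ▸ (hfT b hb).2) hzT
    · exact absurd (hfq₀ ▸ hab ▸ (hfS'' b hb1 hb2 hb3).2) hzS''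
    · exact absurd (hfq₀ ▸ hfw ▸ hab.symm) hzy
    · rfl
    · exact absurd (hfw ▸ hab ▸ (hfT b hb).2) hyT
    · exact absurd (hfw ▸ hab ▸ (hfS'' b hb1 hb2 hb3).2) hyS''
    · exact absurd (hfq₀ ▸ hab.symm ▸ (hfT a ha).2) hzT
    · exact absurd (hfw ▸ hab.symm ▸ (hfT a ha).2) hyT
    · -- both e₁
      have h1 := (hfT a ha).1
      have h2 := (hfT b hb).1
      have : (⟨a, ha⟩ : {x // x ∈ N.erase w}) = ⟨b, hb⟩ :=
        e₁.injective (Subtype.ext (h1 ▸ h2 ▸ hab))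
      exact congrArg Subtype.val this
    · exact absurd (hab ▸ (hfT a ha).2) (fun h => hTS'' _ h (hfS'' b hb1 hb2 hb3).2)
    · exact absurd (hfq₀ ▸ hab.symm ▸ (hfS'' a ha1 ha2 ha3).2) hzS''
    · exact absurd (hfw ▸ hab.symm ▸ (hfS'' a ha1 ha2 ha3).2) hyS''
    · exact absurd (hab.symm ▸ (hfT b hb).2) (fun h => hTS'' _ h (hfS'' a ha1 ha2 ha3).2)
    · -- both e₂
      have h1 := (hfS'' a ha1 ha2 ha3).1
      have h2 := (hfS'' b hb1 hb2 hb3).1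
      have : (⟨a, hmemR a ha1 ha2 ha3⟩ : {x // x ∈ R}) = ⟨b, hmemR b hb1 hb2 hb3⟩ :=
        e₂.injective (Subtype.ext (h1 ▸ h2 ▸ hab))
      exact congrArg Subtype.val this
  -- conditions of rtg_add_edge
  have hqw : F.Adj q₀ w := (SimpleGraph.mem_neighborFinset F q₀ w).mp hwN
  have key := rtg_add_edge F G f hfinj q₀ w hqw
    (by
      intro a b haq hbq hab
      exact hclique _ (hfS a haq) _ (hfS b hbq)
        (fun h => F.ne_of_adj hab (hfinj h)))
    (by
      intro a haq haw
      have haN : a ∈ N.erase w := Finset.mem_erase.mpr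
        ⟨haw, (SimpleGraph.mem_neighborFinset F q₀ a).mpr haq⟩
      rw [hfq₀]
      exact hT _ (hfT a haN).2)
  rw [hfq₀, hfw] at key
  exact key
end

section
variable {α β : Type*} [Fintype α] [DecidableEq α] [DecidableEq β]
variable (F : SimpleGraph α) [DecidableRel F.Adj]

/-- Attach `z` to every vertex of the clique `S`. -/
lemma rtg_attach_all {v δ : ℕ} (hv : Fintype.card α = v)
    (q₀ : α) (hq₀ : (F.neighborFinset q₀).card = δ) (hδ : 1 ≤ δ)
    (G : SimpleGraph β) (S T : Finset β) (z : β)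
    (hclique : ∀ a ∈ S, ∀ b ∈ S, a ≠ b → G.Adj a b)
    (hzS : z ∉ S) (hTS : T ⊆ S) (hT : ∀ t ∈ T, G.Adj z t) (hTcard : T.card = δ - 1)
    (hScard : v - 1 ≤ S.card) :
    ∃ G' : SimpleGraph β, Relation.ReflTransGen (BootStep F) G G' ∧ G ≤ G' ∧
      ∀ a ∈ insert z S, ∀ b ∈ insert z S, a ≠ b → G'.Adj a b := by
  classical
  set k := {t : β | t ∈ S ∧ ¬ G.Adj z t}.ncard with hk
  clear_value k
  induction k using Nat.strong_induction_on generalizing G with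
  | _ k ih =>
    have hfin : {t : β | t ∈ S ∧ ¬ G.Adj z t}.Finite :=
      Set.Finite.subset (S : Finset β).finite_toSet (fun t ht => ht.1)
    by_cases h0 : {t : β | t ∈ S ∧ ¬ G.Adj z t}.ncard = 0
    · refine ⟨G, Relation.ReflTransGen.refl, le_refl G, ?_⟩
      have hall : ∀ t ∈ S, G.Adj z t := by
        intro t ht
        by_contra hc
        have hmem : t ∈ {t : β | t ∈ S ∧ ¬ G.Adj z t} := ⟨ht, hc⟩
        rw [(Set.ncard_eq_zero hfin).mp h0] at hmem
        exact hmem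
      intro a ha b hb hne
      rcases Finset.mem_insert.mp ha with ha' | ha'
      · rcases Finset.mem_insert.mp hb with hb' | hb'
        · exact absurd (ha'.trans hb'.symm) hne
        · exact ha' ▸ hall b hb'
      · rcases Finset.mem_insert.mp hb with hb' | hb'
        · exact hb' ▸ (hall a ha').symm
        · exact hclique a ha' b hb' hne
    · obtain ⟨y, hyS, hyadj⟩ := Set.nonempty_of_ncard_ne_zero h0
      have hyT : y ∉ T := fun h => hyadj (hT y h)
      have hstep := rtg_attach_edge F hv q₀ hq₀ hδ G S T z y hclique hzS hTS hT hTcard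
        hyS hyT hScard
      set G₁ := G ⊔ SimpleGraph.fromEdgeSet {s(z, y)} with hG₁
      have hGle : G ≤ G₁ := le_sup_left
      have hG₁zy : G₁.Adj z y := by
        rw [hG₁, adj_sup_edge]
        exact Or.inr ⟨rfl, fun h => hzS (h ▸ hyS)⟩
      have hdec : {t : β | t ∈ S ∧ ¬ G₁.Adj z t}.ncard <
          {t : β | t ∈ S ∧ ¬ G.Adj z t}.ncard := by
        apply Set.ncard_lt_ncard _ hfin
        constructor
        · exact fun t ht => ⟨ht.1, fun h => ht.2 (hGle h)⟩
        · intro hsub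
          exact (hsub ⟨hyS, hyadj⟩).2 hG₁zy
      obtain ⟨G', h1, h2, h3⟩ := ih _ (hk ▸ hdec) G₁
        (fun a ha b hb hne => hGle (hclique a ha b hb hne))
        (fun t ht => hGle (hT t ht)) rfl
      exact ⟨G', hstep.trans h1, le_trans hGle h2, h3⟩

/-- Complete the graph from a big clique, every outside vertex having `δ-1` neighbours
inside the clique. -/
lemma rtg_top [Fintype β] {v δ : ℕ} (hv : Fintype.card α = v)
    (q₀ : α) (hq₀ : (F.neighborFinset q₀).card = δ) (hδ : 1 ≤ δ)
    (G : SimpleGraph β) (S : Finset β)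
    (hclique : ∀ a ∈ S, ∀ b ∈ S, a ≠ b → G.Adj a b)
    (hout : ∀ z : β, z ∉ S → ∃ T ⊆ S, T.card = δ - 1 ∧ ∀ t ∈ T, G.Adj z t)
    (hScard : v - 1 ≤ S.card) :
    Relation.ReflTransGen (BootStep F) G ⊤ := by
  classical
  set k := Sᶜ.card with hk
  clear_value k
  induction k using Nat.strong_induction_on generalizing S G with
  | _ k ih =>
    by_cases h0 : Sᶜ.card = 0
    · have hSuniv : S = Finset.univ := by
        have : Sᶜ = ∅ := Finset.card_eq_zero.mp h0
        rwa [Finset.compl_eq_empty_iff] at this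
      have : G = ⊤ := by
        ext a b
        simp only [top_adj]
        constructor
        · exact fun h => G.ne_of_adj h
        · intro h
          exact hclique a (hSuniv ▸ Finset.mem_univ a) b (hSuniv ▸ Finset.mem_univ b) h
      rw [← this]
    · obtain ⟨z, hz⟩ := Finset.card_pos.mp (Nat.pos_of_ne_zero h0)
      have hzS : z ∉ S := Finset.mem_compl.mp hz
      obtain ⟨T, hTS, hTcard, hT⟩ := hout z hzS
      obtain ⟨G', h1, h2, h3⟩ := rtg_attach_all F hv q₀ hq₀ hδ G S T z hclique hzS hTS hT
        hTcard hScard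
      have hdec : (insert z S)ᶜ.card < Sᶜ.card := by
        apply Finset.card_lt_card
        constructor
        · intro t ht
          rw [Finset.mem_compl] at ht ⊢
          exact fun h => ht (Finset.mem_insert_of_mem h)
        · intro hsub
          have := hsub hz
          rw [Finset.mem_compl] at this
          exact this (Finset.mem_insert_self z S)
      have htail := ih _ (hk ▸ hdec) G' (insert z S) h3
        (fun z' hz' => by
          have hz'S : z' ∉ S := fun h => hz' (Finset.mem_insert_of_mem h)
          obtain ⟨T', hT'S, hT'card, hT'⟩ := hout z' hz'S
          exact ⟨T', fun t ht => Finset.mem_insert_of_mem (hT'S ht), hT'card,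
            fun t ht => h2 (hT' t ht)⟩)
        (le_trans hScard (Finset.card_le_card (Finset.subset_insert z S))) rfl
      exact h1.trans htail
end

section
variable {α : Type*} [Fintype α] [DecidableEq α]

lemma ncard_iUnion_le_fin {γ : Type*} : ∀ (m : ℕ) (s : Fin m → Set γ), (∀ j, (s j).Finite) →
    ∀ c : ℕ, (∀ j, (s j).ncard ≤ c) → (⋃ j, s j).ncard ≤ m * c := by
  intro m
  induction m with
  | zero => intro s _ c _; simp
  | succ m ih =>
    intro s hfin c hc
    have hsplit : (⋃ j, s j) = (⋃ j : Fin m, s j.castSucc) ∪ s (Fin.last m) := by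
      ext x
      simp only [Set.mem_iUnion, Set.mem_union]
      constructor
      · rintro ⟨j, hj⟩
        rcases Fin.eq_castSucc_or_eq_last j with ⟨i, rfl⟩ | rfl
        · exact Or.inl ⟨i, hj⟩
        · exact Or.inr hj
      · rintro (⟨i, hi⟩ | h)
        · exact ⟨i.castSucc, hi⟩
        · exact ⟨Fin.last m, h⟩
    rw [hsplit]
    calc ((⋃ j : Fin m, s j.castSucc) ∪ s (Fin.last m)).ncard
        ≤ (⋃ j : Fin m, s j.castSucc).ncard + (s (Fin.last m)).ncard :=
          Set.ncard_union_le _ _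
      _ ≤ m * c + c := by
          gcongr
          · exact ih (fun j => s j.castSucc) (fun j => hfin _) c (fun j => hc _)
          · exact hc _
      _ = (m + 1) * c := by ring

/-- From `wsat F v = ℓ - 1` extract a weakly saturated graph `W` on `Fin v` which is
(isomorphic to) a subgraph of `F`. -/
lemma exists_W (F : SimpleGraph α) {v ℓ : ℕ} (hv : v = Fintype.card α)
    (hℓ : ℓ = F.edgeSet.ncard) (hℓ1 : 1 ≤ ℓ) (hwsatv : wsat F v = ℓ - 1) :
    ∃ (W : SimpleGraph (Fin v)) (ψ : Fin v → α), WeaklySat F W ∧ W.edgeSet.ncard = ℓ - 1 ∧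
      Function.Bijective ψ ∧ ∀ x y : Fin v, W.Adj x y → F.Adj (ψ x) (ψ y) := by
  classical
  have hcard : Fintype.card α = v := hv.symm
  have hne : {m | ∃ H : SimpleGraph (Fin v), WeaklySat F H ∧ H.edgeSet.ncard = m}.Nonempty :=
    ⟨(⊤ : SimpleGraph (Fin v)).edgeSet.ncard, ⊤, Relation.ReflTransGen.refl, rfl⟩
  obtain ⟨W, hWsat, hWcard⟩ := Nat.sInf_mem hne
  rw [show sInf {m | ∃ H : SimpleGraph (Fin v), WeaklySat F H ∧ H.edgeSet.ncard = m}
    = wsat F v from rfl, hwsatv] at hWcard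
  have htopcard : ℓ ≤ (⊤ : SimpleGraph (Fin v)).edgeSet.ncard := by
    have e : α ≃ Fin v := Fintype.equivFinOfCardEq hcard
    have hsub : Sym2.map e '' F.edgeSet ⊆ (⊤ : SimpleGraph (Fin v)).edgeSet := by
      rintro x ⟨y, hy, rfl⟩
      induction y with
      | _ a b =>
        rw [SimpleGraph.mem_edgeSet] at hy
        simp only [Sym2.map_pair_eq, SimpleGraph.mem_edgeSet, top_adj]
        exact fun h => F.ne_of_adj hy (e.injective h)
    calc ℓ = F.edgeSet.ncard := hℓ
      _ = (Sym2.map e '' F.edgeSet).ncard :=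
          (Set.ncard_image_of_injective _ (Sym2.map.injective e.injective)).symm
      _ ≤ (⊤ : SimpleGraph (Fin v)).edgeSet.ncard :=
          Set.ncard_le_ncard hsub (Set.toFinite _)
  have hWne : W ≠ ⊤ := by
    intro h
    rw [h] at hWcard
    omega
  rcases hWsat.cases_head with h | ⟨W₁, hstep, _⟩
  · exact absurd h hWne
  obtain ⟨x, y, hxy, hnadj, hW₁, φ, hφinj, -⟩ := hstep
  -- φ is bijective
  have hφbij : Function.Bijective φ := by
    rw [Fintype.bijective_iff_injective_and_card]
    exact ⟨hφinj, by rw [hcard, Fintype.card_fin]⟩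
  have hW₁card : W₁.edgeSet.ncard = ℓ := by
    rw [hW₁, SimpleGraph.edgeSet_sup, SimpleGraph.edgeSet_fromEdgeSet]
    have hdiag : ({s(x, y)} : Set (Sym2 (Fin v))) \ Sym2.diagSet = {s(x, y)} := by
      apply sdiff_eq_self_iff_disjoint.mpr
      rw [Set.disjoint_singleton_right]
      exact fun hd => absurd (Sym2.isDiag_iff_proj_eq.mp (Sym2.mem_diagSet.mp hd)) hxy
    rw [hdiag, Set.ncard_union_eq (by
      rw [Set.disjoint_singleton_right]
      exact fun h => hnadj ((SimpleGraph.mem_edgeSet W).mp h))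
      (Set.toFinite _) (Set.toFinite _)]
    rw [hWcard, Set.ncard_singleton]
    omega
  have himg : Sym2.map φ '' F.edgeSet = W₁.edgeSet := by
    apply Set.eq_of_subset_of_ncard_le
    · rintro e ⟨e', he', rfl⟩
      exact φ.map_mem_edgeSet he'
    · rw [hW₁card, Set.ncard_image_of_injective _ (Sym2.map.injective hφinj), ← hℓ]
    · exact Set.toFinite _
  set ψe : α ≃ Fin v := Equiv.ofBijective φ hφbij with hψe
  refine ⟨W, ψe.symm, hWsat, hWcard, ψe.symm.bijective, ?_⟩
  intro a b hab
  have hWle : W ≤ W₁ := by rw [hW₁]; exact le_sup_left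
  have hmem : s(a, b) ∈ W₁.edgeSet := (SimpleGraph.mem_edgeSet W₁).mpr (hWle hab)
  rw [← himg] at hmem
  obtain ⟨e', he', heq⟩ := hmem
  induction e' with
  | _ c d =>
    rw [SimpleGraph.mem_edgeSet] at he'
    rw [Sym2.map_pair_eq, Sym2.eq_iff] at heq
    have hψφ : ∀ t : α, ψe.symm (φ t) = t := fun t => ψe.symm_apply_apply t
    rcases heq with ⟨hc, hd⟩ | ⟨hc, hd⟩
    · rw [← hc, ← hd, hψφ, hψφ]; exact he'
    · rw [← hc, ← hd, hψφ, hψφ]; exact he'.symm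
end

section
variable {α : Type*} [Fintype α] [DecidableEq α]

/-- A full copy of `F` in `G` can be completed to a clique, given a weakly saturated
subgraph pattern `W`. -/
lemma rtg_clique_of_copy {β : Type*} (F : SimpleGraph α) {v : ℕ}
    (W : SimpleGraph (Fin v)) (ψ : Fin v → α) (hWsat : WeaklySat F W)
    (hψbij : Function.Bijective ψ) (hψadj : ∀ x y : Fin v, W.Adj x y → F.Adj (ψ x) (ψ y))
    (G : SimpleGraph β) (g : α → β) (hg : Function.Injective g)
    (hcopy : ∀ a b : α, F.Adj a b → G.Adj (g a) (g b)) :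
    ∃ G' : SimpleGraph β, Relation.ReflTransGen (BootStep F) G G' ∧ G ≤ G' ∧
      ∀ a b : α, a ≠ b → G'.Adj (g a) (g b) := by
  set ι : Fin v ↪ β := ⟨g ∘ ψ, hg.comp hψbij.injective⟩ with hι
  have hle : SimpleGraph.map ι W ≤ G := by
    intro c d hcd
    rw [SimpleGraph.map_adj] at hcd
    obtain ⟨x, y, hxy, rfl, rfl⟩ := hcd
    exact hcopy _ _ (hψadj x y hxy)
  have hperc := perc_map F ι hWsat G hle
  refine ⟨G ⊔ SimpleGraph.map ι ⊤, hperc, le_sup_left, ?_⟩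
  intro a b hab
  obtain ⟨x, rfl⟩ := hψbij.surjective a
  obtain ⟨y, rfl⟩ := hψbij.surjective b
  have hadj : (SimpleGraph.map ι ⊤).Adj (g (ψ x)) (g (ψ y)) := by
    rw [SimpleGraph.map_adj]
    exact ⟨x, y, by simp only [top_adj]; exact fun h => hab (congrArg ψ h), rfl, rfl⟩
  exact (le_sup_right : SimpleGraph.map ι ⊤ ≤ G ⊔ SimpleGraph.map ι ⊤) hadj
end

section
variable {α : Type*} [Fintype α]

/-- The main construction: upper bound for `wsat` at `v + p*m`. -/
lemma main_bound (F : SimpleGraph α) {v ℓ δ p : ℕ}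
    (hv : v = Fintype.card α) (hℓ : ℓ = F.edgeSet.ncard) (hℓ1 : 1 ≤ ℓ)
    (hiso : ∀ x : α, ∃ y, F.Adj x y)
    (q₀ : α) (hq₀ : (F.neighborSet q₀).ncard = δ) (hδ : 1 ≤ δ)
    (hwsatv : wsat F v = ℓ - 1)
    (P : Set α) (hP : P.Nonempty) (hPc : δ - 1 ≤ (Pᶜ : Set α).ncard)
    (ℓP : ℕ) (hℓP : ℓP = {e ∈ F.edgeSet | ∀ x ∈ e, x ∉ P}.ncard)
    (hp : p = P.ncard) (m : ℕ) :
    wsat F (v + p * m) ≤ (ℓ - 1) + (ℓ - ℓP - 1) * m := by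
  classical
  have hcard : Fintype.card α = v := hv.symm
  -- basic setup
  obtain ⟨W, ψ, hWsat, hWcard, hψbij, hψadj⟩ := exists_W F hv hℓ hℓ1 hwsatv
  have hq₀' : (F.neighborFinset q₀).card = δ := by
    rw [← hq₀, SimpleGraph.neighborFinset_def, ← Set.ncard_eq_toFinset_card']
  set N := v + p * m with hN
  have hvN : v ≤ N := Nat.le_add_right v (p * m)
  set eqv : α ≃ Fin v := Fintype.equivFinOfCardEq hcard with heqv
  set basef : α → Fin N := fun a => Fin.castLE hvN (eqv a) with hbasef
  have hbasef_inj : Function.Injective basef := fun a b h => by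
    apply eqv.injective
    exact Fin.castLE_injective hvN h
  have hbasef_lt : ∀ a, (basef a).val < v := fun a => (eqv a).isLt
  set Pfin : Finset α := P.toFinset with hPfin
  have hpcard : Pfin.card = p := by rw [hp, hPfin, ← Set.ncard_eq_toFinset_card']
  have hp1 : 1 ≤ p := by
    rw [hp]
    exact (Set.ncard_pos (Set.toFinite P)).mpr hP
  have hpe : Fintype.card {x // x ∈ Pfin} = p := by rw [Fintype.card_coe, hpcard]
  set pe : {x // x ∈ Pfin} ≃ Fin p := Fintype.equivFinOfCardEq hpe with hpedef
  have hlt : ∀ (j : Fin m) (i : Fin p), v + (j.val * p + i.val) < N := by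
    intro j i
    have h1 : j.val * p + i.val < (j.val + 1) * p := by
      have := i.isLt
      calc j.val * p + i.val < j.val * p + p := by omega
        _ = (j.val + 1) * p := by ring
    have h2 : (j.val + 1) * p ≤ m * p := Nat.mul_le_mul_right p j.isLt
    have : j.val * p + i.val < p * m := by
      calc j.val * p + i.val < (j.val + 1) * p := h1
        _ ≤ m * p := h2
        _ = p * m := Nat.mul_comm m p
    omega
  set gmap : Fin m → α → Fin N := fun j a =>
    if h : a ∈ Pfin then ⟨v + (j.val * p + (pe ⟨a, h⟩).val), hlt j (pe ⟨a, h⟩)⟩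
    else basef a with hgmap
  have hgm_base : ∀ (j : Fin m) (a : α), a ∉ Pfin → gmap j a = basef a := by
    intro j a h; rw [hgmap]; exact dif_neg h
  have hgm_P : ∀ (j : Fin m) (a : α) (h : a ∈ Pfin),
      gmap j a = ⟨v + (j.val * p + (pe ⟨a, h⟩).val), hlt j (pe ⟨a, h⟩)⟩ := by
    intro j a h; rw [hgmap]; exact dif_pos h
  have hgmap_inj : ∀ j : Fin m, Function.Injective (gmap j) := by
    intro j a b hab
    by_cases ha : a ∈ Pfin
    · by_cases hb : b ∈ Pfin
      · rw [hgm_P j a ha, hgm_P j b hb] at hab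
        have hval := congrArg Fin.val hab
        simp only at hval
        have : (pe ⟨a, ha⟩).val = (pe ⟨b, hb⟩).val := by omega
        have := pe.injective (Fin.ext this)
        exact congrArg Subtype.val this
      · rw [hgm_P j a ha, hgm_base j b hb] at hab
        have hval := congrArg Fin.val hab
        have := hbasef_lt b
        simp only at hval
        omega
    · by_cases hb : b ∈ Pfin
      · rw [hgm_base j a ha, hgm_P j b hb] at hab
        have hval := congrArg Fin.val hab
        have := hbasef_lt a
        simp only at hval
        omega
      · rw [hgm_base j a ha, hgm_base j b hb] at hab
        exact hbasef_inj hab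
  -- the distinguished dropped edge
  obtain ⟨p₁, hp₁P⟩ := hP
  obtain ⟨w₁, hw₁⟩ := hiso p₁
  -- edge sets
  set Tedges : Set (Sym2 α) := {e ∈ F.edgeSet | ∃ x ∈ e, x ∈ P} with hTedges
  set NT : Set (Sym2 α) := {e ∈ F.edgeSet | ∀ x ∈ e, x ∉ P} with hNT
  have hTeq : Tedges = F.edgeSet \ NT := by
    ext e
    simp only [hTedges, hNT, Set.mem_setOf_eq, Set.mem_diff, Set.mem_sep_iff]
    constructor
    · rintro ⟨he, x, hx, hxP⟩
      exact ⟨he, fun h => h.2 x hx hxP⟩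
    · rintro ⟨he, h⟩
      refine ⟨he, ?_⟩
      by_contra hc
      push_neg at hc
      exact h ⟨he, hc⟩
  have hNTsub : NT ⊆ F.edgeSet := fun e he => he.1
  have hTcard : Tedges.ncard = ℓ - ℓP := by
    rw [hTeq, Set.ncard_diff hNTsub (Set.toFinite _), ← hℓ, ← hℓP]
  have he₁T : s(p₁, w₁) ∈ Tedges := by
    refine ⟨(SimpleGraph.mem_edgeSet F).mpr hw₁, p₁, ?_, hp₁P⟩
    simp
  have hℓPlt : ℓP + 1 ≤ ℓ := by
    have h1 : 1 ≤ Tedges.ncard := by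
      exact (Set.ncard_pos (Set.Finite.subset (Set.toFinite F.edgeSet)
        (fun e he => he.1))).mpr ⟨_, he₁T⟩
    have h2 : ℓP ≤ ℓ := by
      rw [hℓ, hℓP]
      exact Set.ncard_le_ncard (fun e he => he.1) (Set.toFinite _)
    omega
  set D : Set (Sym2 α) := Tedges \ {s(p₁, w₁)} with hD
  have hDfin : D.Finite := Set.Finite.subset (Set.toFinite F.edgeSet)
    (fun e he => he.1.1)
  have hDcard : D.ncard = ℓ - ℓP - 1 := by
    rw [hD, Set.ncard_diff_singleton_of_mem he₁T, hTcard]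
  -- membership in D
  have hmemD : ∀ a b : α, F.Adj a b → (a ∈ P ∨ b ∈ P) → s(a, b) ≠ s(p₁, w₁) →
      s(a, b) ∈ D := by
    intro a b hab htouch hne
    refine ⟨⟨(SimpleGraph.mem_edgeSet F).mpr hab, ?_⟩, hne⟩
    rcases htouch with h | h
    · exact ⟨a, by simp, h⟩
    · exact ⟨b, by simp, h⟩
  -- the constructed graph
  set ι₀ : Fin v ↪ Fin N := Fin.castLEEmb hvN with hι₀
  set Bj : Fin m → SimpleGraph (Fin N) :=
    fun j => SimpleGraph.fromEdgeSet (Sym2.map (gmap j) '' D) with hBj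
  set G₀ : SimpleGraph (Fin N) := SimpleGraph.map ι₀ W ⊔ ⨆ j : Fin m, Bj j with hG₀
  -- edge count
  have hcount : G₀.edgeSet.ncard ≤ (ℓ - 1) + (ℓ - ℓP - 1) * m := by
    rw [hG₀, SimpleGraph.edgeSet_sup]
    have h1 : (SimpleGraph.map ι₀ W).edgeSet ⊆ Sym2.map ι₀ '' W.edgeSet := by
      rintro e he
      induction e with
      | _ c d =>
        rw [SimpleGraph.mem_edgeSet, SimpleGraph.map_adj] at he
        obtain ⟨x, y, hxy, rfl, rfl⟩ := he
        exact ⟨s(x, y), (SimpleGraph.mem_edgeSet W).mpr hxy, Sym2.map_pair_eq ι₀ x y⟩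
    have h2 : (⨆ j : Fin m, Bj j).edgeSet ⊆ ⋃ j : Fin m, Sym2.map (gmap j) '' D := by
      have hle : (⨆ j : Fin m, Bj j) ≤
          SimpleGraph.fromEdgeSet (⋃ j : Fin m, Sym2.map (gmap j) '' D) := by
        apply iSup_le
        intro j
        rw [hBj]
        exact SimpleGraph.fromEdgeSet_mono (Set.subset_iUnion
          (fun j : Fin m => Sym2.map (gmap j) '' D) j)
      refine subset_trans (SimpleGraph.edgeSet_mono hle) ?_
      rw [SimpleGraph.edgeSet_fromEdgeSet]
      exact Set.diff_subset
    calc ((SimpleGraph.map ι₀ W).edgeSet ∪ (⨆ j : Fin m, Bj j).edgeSet).ncard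
        ≤ (SimpleGraph.map ι₀ W).edgeSet.ncard + (⨆ j : Fin m, Bj j).edgeSet.ncard :=
          Set.ncard_union_le _ _
      _ ≤ (ℓ - 1) + (ℓ - ℓP - 1) * m := by
          gcongr
          · calc (SimpleGraph.map ι₀ W).edgeSet.ncard
                ≤ (Sym2.map ι₀ '' W.edgeSet).ncard :=
                  Set.ncard_le_ncard h1 (Set.toFinite _)
              _ = W.edgeSet.ncard :=
                  Set.ncard_image_of_injective _ (Sym2.map.injective ι₀.injective)
              _ = ℓ - 1 := hWcard
          · calc (⨆ j : Fin m, Bj j).edgeSet.ncard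
                ≤ (⋃ j : Fin m, Sym2.map (gmap j) '' D).ncard :=
                  Set.ncard_le_ncard h2 (Set.toFinite _)
              _ ≤ m * (ℓ - ℓP - 1) := by
                  apply ncard_iUnion_le_fin m _ (fun j => hDfin.image _)
                  intro j
                  calc (Sym2.map (gmap j) '' D).ncard ≤ D.ncard :=
                        Set.ncard_image_le hDfin
                    _ = ℓ - ℓP - 1 := hDcard
              _ = (ℓ - ℓP - 1) * m := Nat.mul_comm m _
  -- percolation
  set Sbase : Finset (Fin N) := Finset.image basef Finset.univ with hSbase
  have hSbase_card : Sbase.card = v := by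
    rw [hSbase, Finset.card_image_of_injective _ hbasef_inj, Finset.card_univ, hcard]
  have hmem_Sbase : ∀ z : Fin N, z ∈ Sbase ↔ z.val < v := by
    intro z
    constructor
    · intro hz
      obtain ⟨a, -, rfl⟩ := Finset.mem_image.mp hz
      exact hbasef_lt a
    · intro hz
      refine Finset.mem_image.mpr ⟨eqv.symm ⟨z.val, hz⟩, Finset.mem_univ _, ?_⟩
      apply Fin.ext
      rw [hbasef]
      simp
  have hstep1 := perc_map F ι₀ hWsat G₀ le_sup_left
  set G₁ : SimpleGraph (Fin N) := G₀ ⊔ SimpleGraph.map ι₀ ⊤ with hG₁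
  have hG₀le : G₀ ≤ G₁ := le_sup_left
  have hclique₁ : ∀ a ∈ Sbase, ∀ b ∈ Sbase, a ≠ b → G₁.Adj a b := by
    intro a ha b hb hne
    obtain ⟨a', -, rfl⟩ := Finset.mem_image.mp ha
    obtain ⟨b', -, rfl⟩ := Finset.mem_image.mp hb
    have hadj : (SimpleGraph.map ι₀ ⊤).Adj (basef a') (basef b') := by
      rw [SimpleGraph.map_adj]
      refine ⟨eqv a', eqv b', ?_, rfl, rfl⟩
      simp only [top_adj]
      intro h
      exact hne (by rw [hbasef]; exact congrArg (Fin.castLE hvN) h)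
    exact (le_sup_right : SimpleGraph.map ι₀ ⊤ ≤ G₁) hadj
  have hBj_le : ∀ j : Fin m, Bj j ≤ G₀ := fun j =>
    le_trans (le_iSup (fun j => Bj j) j) le_sup_right
  have hBj_adj : ∀ (j : Fin m) (a b : α), F.Adj a b → s(a, b) ∈ D →
      (Bj j).Adj (gmap j a) (gmap j b) := by
    intro j a b hab hD'
    rw [hBj, SimpleGraph.fromEdgeSet_adj]
    exact ⟨⟨s(a, b), hD', Sym2.map_pair_eq _ _ _⟩,
      fun h => F.ne_of_adj hab (hgmap_inj j h)⟩
  have hblock : ∀ (j : Fin m) (G : SimpleGraph (Fin N)), G₁ ≤ G →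
      ∃ G' : SimpleGraph (Fin N), Relation.ReflTransGen (BootStep F) G G' ∧ G ≤ G' ∧
        ∀ a b : α, a ≠ b → G'.Adj (gmap j a) (gmap j b) := by
    intro j G hle
    have hadj_partial : ∀ a b : α, F.Adj a b → s(a, b) ≠ s(p₁, w₁) →
        G.Adj (gmap j a) (gmap j b) := by
      intro a b hab hne
      by_cases htouch : a ∈ P ∨ b ∈ P
      · exact hle (hG₀le (hBj_le j (hBj_adj j a b hab (hmemD a b hab htouch hne))))
      · push_neg at htouch
        have ha : a ∉ Pfin := by rw [hPfin, Set.mem_toFinset]; exact htouch.1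
        have hb : b ∉ Pfin := by rw [hPfin, Set.mem_toFinset]; exact htouch.2
        rw [hgm_base j a ha, hgm_base j b hb]
        exact hle (hclique₁ _ (Finset.mem_image.mpr ⟨a, Finset.mem_univ a, rfl⟩)
          _ (Finset.mem_image.mpr ⟨b, Finset.mem_univ b, rfl⟩)
          (fun h => F.ne_of_adj hab (hbasef_inj h)))
    have hstepa := rtg_add_edge F G (gmap j) (hgmap_inj j) p₁ w₁ hw₁
      (by
        intro a b haq hbq hab
        refine hadj_partial a b hab ?_
        intro h
        rw [Sym2.eq_iff] at h
        rcases h with ⟨h1, -⟩ | ⟨-, h2⟩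
        · exact haq h1
        · exact hbq h2)
      (by
        intro a hpa haw
        refine hadj_partial p₁ a hpa ?_
        intro h
        rw [Sym2.eq_iff] at h
        rcases h with ⟨-, h2⟩ | ⟨-, h2⟩
        · exact haw h2
        · exact F.ne_of_adj hpa h2.symm)
    set G₂ := G ⊔ SimpleGraph.fromEdgeSet {s(gmap j p₁, gmap j w₁)} with hG₂'
    have hGleG₂ : G ≤ G₂ := le_sup_left
    have hcopy : ∀ a b : α, F.Adj a b → G₂.Adj (gmap j a) (gmap j b) := by
      intro a b hab
      by_cases h : s(a, b) = s(p₁, w₁)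
      · rw [hG₂', adj_sup_edge]
        refine Or.inr ⟨?_, fun hh => F.ne_of_adj hab (hgmap_inj j hh)⟩
        have h2 := congrArg (Sym2.map (gmap j)) h
        rwa [Sym2.map_pair_eq, Sym2.map_pair_eq] at h2
      · exact hGleG₂ (hadj_partial a b hab h)
    obtain ⟨G₃, hs3, hle3, hadj3⟩ := rtg_clique_of_copy F W ψ hWsat hψbij hψadj G₂
      (gmap j) (hgmap_inj j) hcopy
    exact ⟨G₃, hstepa.trans hs3, le_trans hGleG₂ hle3, hadj3⟩
  have hall : ∀ L : List (Fin m), ∃ G', Relation.ReflTransGen (BootStep F) G₁ G' ∧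
      G₁ ≤ G' ∧ ∀ j ∈ L, ∀ a b : α, a ≠ b → G'.Adj (gmap j a) (gmap j b) := by
    intro L
    induction L with
    | nil => exact ⟨G₁, Relation.ReflTransGen.refl, le_rfl, by simp⟩
    | cons j L ih =>
      obtain ⟨G', h1, h2, h3⟩ := ih
      obtain ⟨G'', h1', h2', h3'⟩ := hblock j G' h2
      refine ⟨G'', h1.trans h1', le_trans h2 h2', ?_⟩
      intro j' hj' a b hab
      rcases List.mem_cons.mp hj' with rfl | hj'
      · exact h3' a b hab
      · exact h2' (h3 j' hj' a b hab)
  obtain ⟨Gfin, hfin1, hfin2, hfin3⟩ := hall (List.finRange m)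
  -- δ-1 vertices outside P
  have hPcfin : δ - 1 ≤ Pfinᶜ.card := by
    have h1 : (Pᶜ : Set α).toFinset = Pfinᶜ := by rw [hPfin]; exact Set.toFinset_compl P
    have h2 : (Pᶜ : Set α).ncard = Pfinᶜ.card := by
      rw [Set.ncard_eq_toFinset_card', h1]
    omega
  obtain ⟨Tα, hTαsub, hTαcard⟩ := Finset.exists_subset_card_eq hPcfin
  have hout : ∀ z : Fin N, z ∉ Sbase → ∃ T ⊆ Sbase, T.card = δ - 1 ∧
      ∀ t ∈ T, Gfin.Adj z t := by
    intro z hz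
    have hzv : v ≤ z.val := by
      by_contra hc
      push_neg at hc
      exact hz ((hmem_Sbase z).mpr hc)
    set t := z.val - v with ht
    have htlt : t < p * m := by
      have := z.isLt
      omega
    have hjlt : t / p < m := (Nat.div_lt_iff_lt_mul hp1).mpr
      (by rw [Nat.mul_comm]; exact htlt)
    set j : Fin m := ⟨t / p, hjlt⟩ with hj
    set i : Fin p := ⟨t % p, Nat.mod_lt t hp1⟩ with hi
    set aP := pe.symm i with haP
    have haPfin : (aP : α) ∈ Pfin := aP.2
    have hgz : gmap j (aP : α) = z := by
      rw [hgm_P j _ haPfin]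
      apply Fin.ext
      have h1 : pe ⟨(aP : α), haPfin⟩ = i := by
        have h0 : (⟨(aP : α), haPfin⟩ : {x // x ∈ Pfin}) = aP := Subtype.ext rfl
        rw [h0, haP, Equiv.apply_symm_apply]
      show v + (j.val * p + (pe ⟨(aP : α), haPfin⟩).val) = z.val
      rw [h1]
      show v + (t / p * p + t % p) = z.val
      have h3 := Nat.div_add_mod t p
      have h4 : t / p * p + t % p = t := by rw [Nat.mul_comm]; exact h3
      rw [h4]
      omega
    refine ⟨Finset.image basef Tα, ?_, ?_, ?_⟩
    · intro x hx
      obtain ⟨b, -, rfl⟩ := Finset.mem_image.mp hx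
      exact Finset.mem_image.mpr ⟨b, Finset.mem_univ b, rfl⟩
    · rw [Finset.card_image_of_injective _ hbasef_inj, hTαcard]
    · intro x hx
      obtain ⟨b, hb, rfl⟩ := Finset.mem_image.mp hx
      have hbP : b ∉ Pfin := Finset.mem_compl.mp (hTαsub hb)
      have hne : (aP : α) ≠ b := fun h => hbP (h ▸ haPfin)
      have hadj := hfin3 j (List.mem_finRange j) (aP : α) b hne
      rwa [hgz, hgm_base j b hbP] at hadj
  have htop := rtg_top F hcard q₀ hq₀' hδ Gfin Sbase
    (fun a ha b hb hne => hfin2 (hclique₁ a ha b hb hne)) hout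
    (by rw [hSbase_card]; omega)
  have hwsat : WeaklySat F G₀ := (hstep1.trans hfin1).trans htop
  calc wsat F (v + p * m) ≤ G₀.edgeSet.ncard := Nat.sInf_le ⟨G₀, hwsat, rfl⟩
    _ ≤ (ℓ - 1) + (ℓ - ℓP - 1) * m := hcount
end

section
variable {α : Type*} [Fintype α]

/-- Adding one vertex costs at most `δ - 1` extra edges. -/
lemma wsat_succ (F : SimpleGraph α) {v δ : ℕ} (hv : v = Fintype.card α)
    (q₀ : α) (hq₀ : (F.neighborSet q₀).ncard = δ) (hδ : 1 ≤ δ)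
    (n : ℕ) (hn : v ≤ n) :
    wsat F (n + 1) ≤ wsat F n + (δ - 1) := by
  classical
  have hcard : Fintype.card α = v := hv.symm
  have hq₀' : (F.neighborFinset q₀).card = δ := by
    rw [← hq₀, SimpleGraph.neighborFinset_def, ← Set.ncard_eq_toFinset_card']
  have hδv : δ + 1 ≤ v := by
    have hsub : F.neighborFinset q₀ ⊆ Finset.univ.erase q₀ := fun x hx =>
      Finset.mem_erase.mpr ⟨fun h => (SimpleGraph.notMem_neighborFinset_self F q₀)
        (h ▸ hx), Finset.mem_univ x⟩
    have := Finset.card_le_card hsub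
    rw [hq₀', Finset.card_erase_of_mem (Finset.mem_univ q₀), Finset.card_univ, hcard] at this
    omega
  have hne : {m | ∃ H : SimpleGraph (Fin n), WeaklySat F H ∧ H.edgeSet.ncard = m}.Nonempty :=
    ⟨(⊤ : SimpleGraph (Fin n)).edgeSet.ncard, ⊤, Relation.ReflTransGen.refl, rfl⟩
  obtain ⟨Wn, hWsat, hWcard⟩ := Nat.sInf_mem hne
  set emb : Fin n ↪ Fin (n + 1) := Fin.castSuccEmb with hemb
  have hδn : δ - 1 ≤ (Finset.univ : Finset (Fin n)).card := by
    rw [Finset.card_univ, Fintype.card_fin]; omega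
  obtain ⟨Tn, -, hTncard⟩ := Finset.exists_subset_card_eq hδn
  set Estar : Set (Sym2 (Fin (n + 1))) :=
    (fun t => s(Fin.last n, Fin.castSucc t)) '' (Tn : Set (Fin n)) with hEstar
  set G : SimpleGraph (Fin (n + 1)) := SimpleGraph.map emb Wn ⊔
    SimpleGraph.fromEdgeSet Estar with hG
  -- edge count
  have hcount : G.edgeSet.ncard ≤ wsat F n + (δ - 1) := by
    rw [hG, SimpleGraph.edgeSet_sup]
    have h1 : (SimpleGraph.map emb Wn).edgeSet ⊆ Sym2.map emb '' Wn.edgeSet := by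
      rintro e he
      induction e with
      | _ c d =>
        rw [SimpleGraph.mem_edgeSet, SimpleGraph.map_adj] at he
        obtain ⟨x, y, hxy, rfl, rfl⟩ := he
        exact ⟨s(x, y), (SimpleGraph.mem_edgeSet Wn).mpr hxy, Sym2.map_pair_eq emb x y⟩
    calc ((SimpleGraph.map emb Wn).edgeSet ∪ (SimpleGraph.fromEdgeSet Estar).edgeSet).ncard
        ≤ (SimpleGraph.map emb Wn).edgeSet.ncard +
          (SimpleGraph.fromEdgeSet Estar).edgeSet.ncard := Set.ncard_union_le _ _
      _ ≤ wsat F n + (δ - 1) := by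
          gcongr
          · calc (SimpleGraph.map emb Wn).edgeSet.ncard
                ≤ (Sym2.map emb '' Wn.edgeSet).ncard := Set.ncard_le_ncard h1 (Set.toFinite _)
              _ = Wn.edgeSet.ncard :=
                  Set.ncard_image_of_injective _ (Sym2.map.injective emb.injective)
              _ = wsat F n := hWcard
          · calc (SimpleGraph.fromEdgeSet Estar).edgeSet.ncard
                ≤ Estar.ncard := by
                  rw [SimpleGraph.edgeSet_fromEdgeSet]
                  exact Set.ncard_le_ncard Set.diff_subset (Set.toFinite _)
              _ ≤ (Tn : Set (Fin n)).ncard := Set.ncard_image_le (Set.toFinite _)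
              _ = δ - 1 := by rw [Set.ncard_coe_finset, hTncard]
  -- percolation
  have hstep1 := perc_map F emb hWsat G le_sup_left
  set G₁ : SimpleGraph (Fin (n + 1)) := G ⊔ SimpleGraph.map emb ⊤ with hG₁
  set Sb : Finset (Fin (n + 1)) := Finset.image Fin.castSucc Finset.univ with hSb
  have hcastinj : Function.Injective (Fin.castSucc : Fin n → Fin (n + 1)) :=
    Fin.castSucc_injective n
  have hSbcard : Sb.card = n := by
    rw [hSb, Finset.card_image_of_injective _ hcastinj, Finset.card_univ, Fintype.card_fin]
  have hclique₁ : ∀ a ∈ Sb, ∀ b ∈ Sb, a ≠ b → G₁.Adj a b := by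
    intro a ha b hb hne
    obtain ⟨a', -, rfl⟩ := Finset.mem_image.mp ha
    obtain ⟨b', -, rfl⟩ := Finset.mem_image.mp hb
    have hadj : (SimpleGraph.map emb ⊤).Adj (Fin.castSucc a') (Fin.castSucc b') := by
      rw [SimpleGraph.map_adj]
      exact ⟨a', b', by simp only [top_adj]; exact fun h => hne (congrArg _ h), rfl, rfl⟩
    exact (le_sup_right : SimpleGraph.map emb ⊤ ≤ G₁) hadj
  have hlastS : Fin.last n ∉ Sb := by
    intro h
    obtain ⟨a', -, heq⟩ := Finset.mem_image.mp h
    have := congrArg Fin.val heq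
    simp only [Fin.val_last, Fin.coe_castSucc] at this
    omega
  set T : Finset (Fin (n + 1)) := Finset.image Fin.castSucc Tn with hT
  have hTS : T ⊆ Sb := by
    intro x hx
    obtain ⟨b, -, rfl⟩ := Finset.mem_image.mp hx
    exact Finset.mem_image.mpr ⟨b, Finset.mem_univ b, rfl⟩
  have hTadj : ∀ t ∈ T, G₁.Adj (Fin.last n) t := by
    intro x hx
    obtain ⟨b, hb, rfl⟩ := Finset.mem_image.mp hx
    have hadj : (SimpleGraph.fromEdgeSet Estar).Adj (Fin.last n) (Fin.castSucc b) := by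
      rw [SimpleGraph.fromEdgeSet_adj]
      refine ⟨⟨b, hb, rfl⟩, ?_⟩
      intro h
      have := congrArg Fin.val h
      simp only [Fin.val_last, Fin.coe_castSucc] at this
      omega
    exact (le_sup_left : G ≤ G₁) ((le_sup_right : SimpleGraph.fromEdgeSet Estar ≤ G) hadj)
  have hTcard : T.card = δ - 1 := by
    rw [hT, Finset.card_image_of_injective _ hcastinj, hTncard]
  obtain ⟨G', hG'1, -, hG'3⟩ := rtg_attach_all F hcard q₀ hq₀' hδ G₁ Sb T (Fin.last n)
    hclique₁ hlastS hTS hTadj hTcard (by omega)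
  have hins : insert (Fin.last n) Sb = (Finset.univ : Finset (Fin (n + 1))) := by
    apply Finset.eq_univ_of_forall
    intro x
    rcases Fin.eq_castSucc_or_eq_last x with ⟨y, rfl⟩ | rfl
    · exact Finset.mem_insert_of_mem (Finset.mem_image.mpr ⟨y, Finset.mem_univ y, rfl⟩)
    · exact Finset.mem_insert_self _ _
  have hGtop : G' = ⊤ := by
    ext a b
    simp only [top_adj]
    constructor
    · exact fun h => G'.ne_of_adj h
    · intro h
      exact hG'3 a (hins ▸ Finset.mem_univ a) b (hins ▸ Finset.mem_univ b) h
  have hwsat : WeaklySat F G := (hstep1.trans (hGtop ▸ hG'1) : _)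
  calc wsat F (n + 1) ≤ G.edgeSet.ncard := Nat.sInf_le ⟨G, hwsat, rfl⟩
    _ ≤ wsat F n + (δ - 1) := hcount
end

/-- If `wsat(v,F) = ℓ − 1`, `P ⊆ V(F)` is nonempty with
`|V(F) \ P| ≥ δ − 1`, and `ℓ_P` is the number of edges of `F` with both endpoints outside
`P`, then `wsat(v + |P|·m, F) ≤ (ℓ − ℓ_P − 1)·m + ℓ − 1` for every `m ≥ 0`; consequently
`wsat(n,F) ≤ ((ℓ − ℓ_P − 1)/|P|)·n + C` for some `C > 0` and all `n ≥ v`. -/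
theorem wsat_upper_bound_sparse {α : Type*} [Fintype α] (F : SimpleGraph α)
    (v ℓ δ : ℕ) (hv : v = Fintype.card α) (hℓ : ℓ = F.edgeSet.ncard)
    (hiso : ∀ x : α, ∃ y, F.Adj x y)
    (hmindeg : ∀ x : α, δ ≤ (F.neighborSet x).ncard)
    (hmineq : ∃ x : α, (F.neighborSet x).ncard = δ)
    (hwsatv : wsat F v = ℓ - 1)
    (P : Set α) (hP : P.Nonempty) (hPc : δ - 1 ≤ (Pᶜ : Set α).ncard)
    (ℓP : ℕ) (hℓP : ℓP = {e ∈ F.edgeSet | ∀ x ∈ e, x ∉ P}.ncard) :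
    (∀ m : ℕ,
      (wsat F (v + P.ncard * m) : ℝ) ≤ ((ℓ : ℝ) - (ℓP : ℝ) - 1) * (m : ℝ) + (ℓ : ℝ) - 1) ∧
    (∃ C : ℝ, 0 < C ∧ ∀ n : ℕ, v ≤ n →
      (wsat F n : ℝ) ≤ (((ℓ : ℝ) - (ℓP : ℝ) - 1) / (P.ncard : ℝ)) * (n : ℝ) + C) := by
  classical
  obtain ⟨q₀, hq₀⟩ := hmineq
  have hδ1 : 1 ≤ δ := by
    obtain ⟨y, hy⟩ := hiso q₀
    have h1 : (F.neighborSet q₀).Nonempty := ⟨y, hy⟩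
    have h2 := (Set.ncard_pos (Set.toFinite _)).mpr h1
    omega
  obtain ⟨p₁, hp₁⟩ := hP
  obtain ⟨w₁, hw₁⟩ := hiso p₁
  have hℓ1 : 1 ≤ ℓ := by
    have h1 : (F.edgeSet).Nonempty := ⟨s(p₁, w₁), hw₁⟩
    have h2 := (Set.ncard_pos (Set.toFinite _)).mpr h1
    omega
  have he₁mem : s(p₁, w₁) ∈ F.edgeSet := (SimpleGraph.mem_edgeSet F).mpr hw₁
  have hℓP1 : ℓP + 1 ≤ ℓ := by
    have hsub : {e ∈ F.edgeSet | ∀ x ∈ e, x ∉ P} ⊆ F.edgeSet \ {s(p₁, w₁)} := by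
      rintro e ⟨he, hall⟩
      refine ⟨he, ?_⟩
      intro hmem
      rw [Set.mem_singleton_iff] at hmem
      exact hall p₁ (by rw [hmem]; simp) hp₁
    have h2 : ℓP ≤ (F.edgeSet \ {s(p₁, w₁)}).ncard :=
      hℓP ▸ Set.ncard_le_ncard hsub (Set.toFinite _)
    have h3 : (F.edgeSet \ {s(p₁, w₁)}).ncard = ℓ - 1 := by
      rw [Set.ncard_diff_singleton_of_mem he₁mem, ← hℓ]
    omega
  set p := P.ncard with hp
  have hp1 : 1 ≤ p := (Set.ncard_pos (Set.toFinite P)).mpr ⟨p₁, hp₁⟩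
  have hmain : ∀ m : ℕ, wsat F (v + p * m) ≤ (ℓ - 1) + (ℓ - ℓP - 1) * m :=
    fun m => main_bound F hv hℓ hℓ1 hiso q₀ hq₀ hδ1 hwsatv P ⟨p₁, hp₁⟩ hPc ℓP hℓP hp m
  have hslope : ((ℓ - ℓP - 1 : ℕ) : ℝ) = (ℓ : ℝ) - (ℓP : ℝ) - 1 := by
    have h : ℓ - ℓP - 1 = ℓ - (ℓP + 1) := by omega
    rw [h, Nat.cast_sub hℓP1]
    push_cast
    ring
  have hcast1 : ((ℓ - 1 : ℕ) : ℝ) = (ℓ : ℝ) - 1 := by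
    rw [Nat.cast_sub hℓ1]
    push_cast
    ring
  constructor
  · intro m
    have h := hmain m
    calc (wsat F (v + p * m) : ℝ)
        ≤ (((ℓ - 1) + (ℓ - ℓP - 1) * m : ℕ) : ℝ) := Nat.cast_le.mpr h
      _ = ((ℓ : ℝ) - (ℓP : ℝ) - 1) * (m : ℝ) + (ℓ : ℝ) - 1 := by
          rw [Nat.cast_add, Nat.cast_mul, hcast1, hslope]
          ring
  · refine ⟨(ℓ : ℝ) + (δ : ℝ) * (p : ℝ) + 1, by positivity, ?_⟩
    intro n hn
    set m := (n - v) / p with hm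
    set r := (n - v) % p with hr
    have hdm := Nat.div_add_mod (n - v) p
    set k := p * m with hk
    have hrp : r < p := Nat.mod_lt _ hp1
    have hnk : n = v + k + r := by omega
    have hiter : ∀ s : ℕ, wsat F (v + k + s) ≤ wsat F (v + k) + (δ - 1) * s := by
      intro s
      induction s with
      | zero => simp
      | succ s ih =>
        have heq : v + k + (s + 1) = (v + k + s) + 1 := by omega
        rw [heq]
        have hstep := wsat_succ F hv q₀ hq₀ hδ1 (v + k + s) (by omega)
        calc wsat F ((v + k + s) + 1) ≤ wsat F (v + k + s) + (δ - 1) := hstep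
          _ ≤ (wsat F (v + k) + (δ - 1) * s) + (δ - 1) := Nat.add_le_add_right ih _
          _ = wsat F (v + k) + (δ - 1) * (s + 1) := by ring
    have hnat : wsat F n ≤ ((ℓ - 1) + (ℓ - ℓP - 1) * m) + (δ - 1) * r := by
      have h1 := hiter r
      rw [← hnk] at h1
      have h2 := hmain m
      rw [← hk] at h2
      calc wsat F n ≤ wsat F (v + k) + (δ - 1) * r := h1
        _ ≤ ((ℓ - 1) + (ℓ - ℓP - 1) * m) + (δ - 1) * r := Nat.add_le_add_right h2 _
    have hcastn : (wsat F n : ℝ) ≤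
        ((ℓ : ℝ) - 1) + ((ℓ : ℝ) - (ℓP : ℝ) - 1) * (m : ℝ) + (((δ - 1) * r : ℕ) : ℝ) := by
      calc (wsat F n : ℝ)
          ≤ ((((ℓ - 1) + (ℓ - ℓP - 1) * m) + (δ - 1) * r : ℕ) : ℝ) := Nat.cast_le.mpr hnat
        _ = _ := by rw [Nat.cast_add, Nat.cast_add, Nat.cast_mul, hcast1, hslope]
    have hp0R : (0 : ℝ) < (p : ℝ) := by exact_mod_cast hp1
    have hm_le : (m : ℝ) ≤ (n : ℝ) / (p : ℝ) := by
      rw [le_div_iff₀ hp0R]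
      have hkn : k ≤ n := by omega
      have hmp : m * p ≤ n := by rw [Nat.mul_comm, ← hk]; exact hkn
      exact_mod_cast hmp
    have hslope_nonneg : (0 : ℝ) ≤ (ℓ : ℝ) - (ℓP : ℝ) - 1 := by
      rw [← hslope]
      positivity
    have hterm : ((ℓ : ℝ) - (ℓP : ℝ) - 1) * (m : ℝ) ≤
        (((ℓ : ℝ) - (ℓP : ℝ) - 1) / (p : ℝ)) * (n : ℝ) := by
      calc ((ℓ : ℝ) - (ℓP : ℝ) - 1) * (m : ℝ)
          ≤ ((ℓ : ℝ) - (ℓP : ℝ) - 1) * ((n : ℝ) / (p : ℝ)) :=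
            mul_le_mul_of_nonneg_left hm_le hslope_nonneg
        _ = (((ℓ : ℝ) - (ℓP : ℝ) - 1) / (p : ℝ)) * (n : ℝ) := by ring
    have hrest : (((δ - 1) * r : ℕ) : ℝ) ≤ (δ : ℝ) * (p : ℝ) := by
      have h1 : (δ - 1) * r ≤ δ * p := Nat.mul_le_mul (by omega) (le_of_lt hrp)
      exact_mod_cast h1
    linarith
end

section
/- For all integers v ≥ 3 and δ with 1 ≤ δ ≤ v − 2, and every integer n ≥ v, wsat(n, F_{v,δ}) = C(v−1, 2) + (n − v + 1)·(δ − 1), where C(v−1,2) denotes the binomial coefficient (v−1 choose 2). -/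
open SimpleGraph

/-- The graph obtained from `K_v` by removing `v - 1 - δ` edges incident to the common
vertex `0`, so that vertex `0` has neighbors `1,…,δ`. -/
def Fvd (v δ : ℕ) : SimpleGraph (Fin v) where
  Adj a b := a ≠ b ∧ (((a : ℕ) ≠ 0 ∧ (b : ℕ) ≠ 0) ∨ ((a : ℕ) ≤ δ ∧ (b : ℕ) ≤ δ))
  symm := by
    constructor
    intro a b h
    exact ⟨h.1.symm, by tauto⟩
  loopless := by
    constructor
    intro a h
    exact h.1 rfl

/-- The graph on `a + b` vertices obtained from the disjoint union of `K_a`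
(vertices `0,…,a-1`) and `K_b` (vertices `a,…,a+b-1`) by adding the `c` pairwise
disjoint edges `{i, a+i}`, `i < c`. -/
def Fabc (a b c : ℕ) : SimpleGraph (Fin (a + b)) where
  Adj x y := x ≠ y ∧ (((x : ℕ) < a ∧ (y : ℕ) < a) ∨ (a ≤ (x : ℕ) ∧ a ≤ (y : ℕ)) ∨
    ((x : ℕ) < c ∧ (y : ℕ) = (x : ℕ) + a) ∨ ((y : ℕ) < c ∧ (x : ℕ) = (y : ℕ) + a))
  symm := by
    constructor
    intro x y h
    exact ⟨h.1.symm, by tauto⟩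
  loopless := by
    constructor
    intro x h
    exact h.1 rfl


/- ======================================================================
   Auxiliary development for the proof of `wsat_Fvd`.
   ====================================================================== -/

section WsatFvdAux
open Polynomial Finset

-- witness graph: clique on {0..w-1}, every other vertex joined to {0..d-1}
def Wit (w d n : ℕ) : SimpleGraph (Fin n) where
  Adj i j := i ≠ j ∧ (((i:ℕ) < w ∧ (j:ℕ) < w) ∨ (i:ℕ) < d ∨ (j:ℕ) < d)
  symm := by
    constructor
    intro i j h
    exact ⟨h.1.symm, by tauto⟩
  loopless := by
    constructor
    intro i h
    exact h.1 rfl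

section steps
variable {w d n : ℕ}

lemma wit_le_top : True := trivial

-- value-level map for step A
private def fA (d uv cv : ℕ) (a : ℕ) : ℕ :=
  if a = 0 then uv else if a ≤ d then a - 1 else if a = d + 1 then cv
  else if a - 2 < cv then a - 2 else a - 1

lemma stepA (hd : d + 2 ≤ w) (hn : w < n)
    (G : SimpleGraph (Fin n)) (hG : Wit w d n ≤ G)
    (u c : Fin n) (hu : w ≤ (u:ℕ)) (hc1 : d ≤ (c:ℕ)) (hc2 : (c:ℕ) < w)
    (hadj : ¬ G.Adj u c) :
    ∃ G', BootStep (Fvd (w+1) (d+1)) G G' ∧ G < G' ∧ Wit w d n ≤ G' := by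
  set G' : SimpleGraph (Fin n) := G ⊔ SimpleGraph.fromEdgeSet {s(u, c)} with hG'
  have hne : u ≠ c := by
    intro h; rw [h] at hu; omega
  have hG'new : G'.Adj u c := by
    rw [hG']
    exact Or.inr (by simp [hne])
  have hGle : G ≤ G' := le_sup_left
  have hWle : Wit w d n ≤ G' := le_trans hG hGle
  -- the homomorphism
  have hfA_lt : ∀ a : Fin (w+1), fA d (u:ℕ) (c:ℕ) (a:ℕ) < n := by
    intro a
    have ha : (a:ℕ) < w + 1 := a.isLt
    have hun : (u:ℕ) < n := u.isLt
    unfold fA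
    split_ifs <;> omega
  set φf : Fin (w+1) → Fin n := fun a => ⟨fA d (u:ℕ) (c:ℕ) (a:ℕ), hfA_lt a⟩ with hφf
  have hinj : Function.Injective φf := by
    intro a b hab
    have h1 : fA d (u:ℕ) (c:ℕ) (a:ℕ) = fA d (u:ℕ) (c:ℕ) (b:ℕ) := congrArg Fin.val hab
    have ha : (a:ℕ) < w + 1 := a.isLt
    have hb : (b:ℕ) < w + 1 := b.isLt
    have : (a:ℕ) = (b:ℕ) := by
      unfold fA at h1
      split_ifs at h1 <;> omega
    exact Fin.ext this
  -- spec lemmas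
  have hφ0 : ∀ a : Fin (w+1), (a:ℕ) = 0 → φf a = u := by
    intro a h; rw [hφf]; apply Fin.ext; simp [fA, h]
  have hφc : ∀ a : Fin (w+1), (a:ℕ) = d + 1 → φf a = c := by
    intro a h; rw [hφf]; apply Fin.ext; simp only [fA, h]
    norm_num
  have hφlt : ∀ a : Fin (w+1), (a:ℕ) ≠ 0 → ((φf a : Fin n):ℕ) < w := by
    intro a h
    have ha : (a:ℕ) < w + 1 := a.isLt
    show fA d (u:ℕ) (c:ℕ) (a:ℕ) < w
    unfold fA
    split_ifs <;> omega
  have hφd : ∀ a : Fin (w+1), (a:ℕ) ≠ 0 → (a:ℕ) ≤ d → ((φf a : Fin n):ℕ) < d := by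
    intro a h h2
    show fA d (u:ℕ) (c:ℕ) (a:ℕ) < d
    unfold fA
    split_ifs <;> omega
  -- adjacency of images when both nonzero
  have hcl : ∀ a b : Fin (w+1), (a:ℕ) ≠ 0 → (b:ℕ) ≠ 0 → a ≠ b → G'.Adj (φf a) (φf b) := by
    intro a b ha hb hab
    apply hWle
    exact ⟨fun h => hab (hinj h), Or.inl ⟨hφlt a ha, hφlt b hb⟩⟩
  have hstar : ∀ b : Fin (w+1), (b:ℕ) ≠ 0 → (b:ℕ) ≤ d + 1 → G'.Adj u (φf b) := by
    intro b hb hbd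
    rcases Nat.lt_or_ge (b:ℕ) (d+1) with h | h
    · -- b ≤ d : original edge
      apply hWle
      refine ⟨?_, Or.inr (Or.inr (hφd b hb (by omega)))⟩
      intro hh
      have := congrArg Fin.val hh
      have := hφd b hb (by omega)
      omega
    · have : (b:ℕ) = d + 1 := by omega
      rw [hφc b this]; exact hG'new
  have hom : ∀ a b : Fin (w+1), (Fvd (w+1) (d+1)).Adj a b → G'.Adj (φf a) (φf b) := by
    intro a b hab
    obtain ⟨hne', hcase⟩ := hab
    have hvne : (a:ℕ) ≠ (b:ℕ) := fun h => hne' (Fin.ext h)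
    rcases Nat.eq_zero_or_pos (a:ℕ) with ha0 | hapos
    · -- a = 0, so b ≤ d+1 and b ≠ 0
      have hb0 : (b:ℕ) ≠ 0 := by omega
      have hbd : (b:ℕ) ≤ d + 1 := by
        rcases hcase with ⟨h1, _⟩ | ⟨_, h2⟩
        · exact absurd ha0 h1
        · exact h2
      rw [hφ0 a ha0]
      exact hstar b hb0 hbd
    · rcases Nat.eq_zero_or_pos (b:ℕ) with hb0 | hbpos
      · have had : (a:ℕ) ≤ d + 1 := by
          rcases hcase with ⟨_, h1⟩ | ⟨h2, _⟩
          · exact absurd hb0 h1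
          · exact h2
        rw [hφ0 b hb0]
        exact (hstar a (by omega) had).symm
      · exact hcl a b (by omega) (by omega) hne'
  refine ⟨G', ⟨u, c, hne, hadj, hG', ⟨φf, fun {a b} h => hom a b h⟩, hinj,
    ⟨0, by omega⟩, ⟨d+1, by omega⟩, ?_, ?_, ?_⟩, ?_, hWle⟩
  · exact ⟨by simp [Fin.ext_iff], Or.inr (by simp)⟩
  · exact hφ0 ⟨0, by omega⟩ rfl
  · exact hφc ⟨d+1, by omega⟩ rfl
  · exact lt_of_le_of_ne hGle (fun h => hadj (h ▸ hG'new))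

private def fB (uv uv' : ℕ) (a : ℕ) : ℕ :=
  if a = 0 then uv' else if a = 1 then uv else a - 2

lemma stepB (hd : d + 2 ≤ w) (hn : w < n)
    (G : SimpleGraph (Fin n)) (hG : Wit w d n ≤ G)
    (hfull : ∀ x y : Fin n, (y:ℕ) < w → x ≠ y → G.Adj x y)
    (u u' : Fin n) (hu : w ≤ (u:ℕ)) (hu' : w ≤ (u':ℕ)) (hne : u ≠ u')
    (hadj : ¬ G.Adj u u') :
    ∃ G', BootStep (Fvd (w+1) (d+1)) G G' ∧ G < G' ∧ Wit w d n ≤ G' := by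
  set G' : SimpleGraph (Fin n) := G ⊔ SimpleGraph.fromEdgeSet {s(u', u)} with hG'
  have hne' : u' ≠ u := hne.symm
  have hvne : (u:ℕ) ≠ (u':ℕ) := fun h => hne (Fin.ext h)
  have hG'new : G'.Adj u' u := by
    rw [hG']
    exact Or.inr (by simp [hne'])
  have hGle : G ≤ G' := le_sup_left
  have hWle : Wit w d n ≤ G' := le_trans hG hGle
  have hfB_lt : ∀ a : Fin (w+1), fB (u:ℕ) (u':ℕ) (a:ℕ) < n := by
    intro a
    have ha : (a:ℕ) < w + 1 := a.isLt
    have h1 : (u:ℕ) < n := u.isLt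
    have h2 : (u':ℕ) < n := u'.isLt
    unfold fB
    split_ifs <;> omega
  set φf : Fin (w+1) → Fin n := fun a => ⟨fB (u:ℕ) (u':ℕ) (a:ℕ), hfB_lt a⟩ with hφf
  have hinj : Function.Injective φf := by
    intro a b hab
    have h1 : fB (u:ℕ) (u':ℕ) (a:ℕ) = fB (u:ℕ) (u':ℕ) (b:ℕ) := congrArg Fin.val hab
    have ha : (a:ℕ) < w + 1 := a.isLt
    have hb : (b:ℕ) < w + 1 := b.isLt
    have : (a:ℕ) = (b:ℕ) := by
      unfold fB at h1
      split_ifs at h1 <;> omega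
    exact Fin.ext this
  have hφ0 : ∀ a : Fin (w+1), (a:ℕ) = 0 → φf a = u' := by
    intro a h; apply Fin.ext; show fB _ _ _ = _; simp [fB, h]
  have hφ1 : ∀ a : Fin (w+1), (a:ℕ) = 1 → φf a = u := by
    intro a h; apply Fin.ext; show fB _ _ _ = _; simp [fB, h]
  have hφlt : ∀ a : Fin (w+1), 2 ≤ (a:ℕ) → ((φf a : Fin n):ℕ) < w := by
    intro a h
    have ha : (a:ℕ) < w + 1 := a.isLt
    show fB (u:ℕ) (u':ℕ) (a:ℕ) < w
    unfold fB
    split_ifs <;> omega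
  have hom : ∀ a b : Fin (w+1), (Fvd (w+1) (d+1)).Adj a b → G'.Adj (φf a) (φf b) := by
    intro a b hab
    obtain ⟨hne2, _⟩ := hab
    have hvne2 : (a:ℕ) ≠ (b:ℕ) := fun h => hne2 (Fin.ext h)
    have key : ∀ x y : Fin (w+1), (x:ℕ) < (y:ℕ) → G'.Adj (φf x) (φf y) := by
      intro x y hxy
      rcases Nat.eq_zero_or_pos (x:ℕ) with hx0 | hxpos
      · rcases Nat.lt_or_ge (y:ℕ) 2 with hy1 | hy2
        · -- x = 0, y = 1 : the new edge
          have : (y:ℕ) = 1 := by omega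
          rw [hφ0 x hx0, hφ1 y this]
          exact hG'new
        · rw [hφ0 x hx0]
          exact hGle (hfull u' (φf y) (hφlt y hy2) (by
            intro h
            have := congrArg Fin.val h
            have := hφlt y hy2
            omega))
      · rcases Nat.lt_or_ge (x:ℕ) 2 with hx1 | hx2
        · -- x = 1, y ≥ 2
          have hx1' : (x:ℕ) = 1 := by omega
          have hy2 : 2 ≤ (y:ℕ) := by omega
          rw [hφ1 x hx1']
          exact hGle (hfull u (φf y) (hφlt y hy2) (by
            intro h
            have := congrArg Fin.val h
            have := hφlt y hy2
            omega))
        · have hy2 : 2 ≤ (y:ℕ) := by omega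
          exact hGle (hfull (φf x) (φf y) (hφlt y hy2) (by
            intro h
            have := congrArg Fin.val (hinj h)
            omega))
    rcases Nat.lt_or_ge (a:ℕ) (b:ℕ) with h | h
    · exact key a b h
    · exact (key b a (by omega)).symm
  refine ⟨G', ⟨u', u, hne', fun h => hadj h.symm, hG', ⟨φf, fun {a b} h => hom a b h⟩, hinj,
    ⟨0, by omega⟩, ⟨1, by omega⟩, ?_, ?_, ?_⟩, ?_, hWle⟩
  · exact ⟨by simp [Fin.ext_iff], Or.inr (by simp)⟩
  · exact hφ0 ⟨0, by omega⟩ rfl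
  · exact hφ1 ⟨1, by omega⟩ rfl
  · exact lt_of_le_of_ne hGle (fun h => hadj ((h ▸ hG'new).symm))

lemma step_exists (hd : d + 2 ≤ w) (hn : w < n)
    (G : SimpleGraph (Fin n)) (hG : Wit w d n ≤ G) (hne : G ≠ ⊤) :
    ∃ G', BootStep (Fvd (w+1) (d+1)) G G' ∧ G < G' ∧ Wit w d n ≤ G' := by
  -- G misses some edge
  have hmiss : ∃ x y : Fin n, x ≠ y ∧ ¬ G.Adj x y := by
    by_contra h
    push_neg at h
    apply hne
    ext x y
    simp only [top_adj]
    exact ⟨fun hxy => hxy.ne, fun hxy => h x y hxy⟩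
  by_cases hA : ∃ p : Fin n × Fin n, w ≤ (p.1:ℕ) ∧ d ≤ (p.2:ℕ) ∧ (p.2:ℕ) < w ∧ ¬ G.Adj p.1 p.2
  · obtain ⟨⟨u, c⟩, h1, h2, h3, h4⟩ := hA
    exact stepA hd hn G hG u c h1 h2 h3 h4
  · push_neg at hA
    have hfull : ∀ x y : Fin n, (y:ℕ) < w → x ≠ y → G.Adj x y := by
      intro x y hy hxy
      rcases Nat.lt_or_ge (y:ℕ) d with hyd | hyd
      · exact hG ⟨hxy, Or.inr (Or.inr hyd)⟩
      · rcases Nat.lt_or_ge (x:ℕ) w with hxw | hxw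
        · exact hG ⟨hxy, Or.inl ⟨hxw, hy⟩⟩
        · by_contra hnadj
          exact hnadj (hA (x, y) hxw hyd hy)
    obtain ⟨x, y, hxy, hnadj⟩ := hmiss
    have hx : w ≤ (x:ℕ) := by
      by_contra h
      exact hnadj ((hfull y x (by omega) hxy.symm).symm)
    have hy : w ≤ (y:ℕ) := by
      by_contra h
      exact hnadj (hfull x y (by omega) hxy)
    exact stepB hd hn G hG hfull x y hx hy hxy hnadj

lemma reach_top (hd : d + 2 ≤ w) (hn : w < n) :
    ∀ k (G : SimpleGraph (Fin n)),
      ((⊤ : SimpleGraph (Fin n)).edgeSet \ G.edgeSet).ncard = k →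
      Wit w d n ≤ G → WeaklySat (Fvd (w+1) (d+1)) G := by
  intro k
  induction k using Nat.strong_induction_on with
  | _ k ih =>
    intro G hk hG
    by_cases hT : G = ⊤
    · exact hT ▸ Relation.ReflTransGen.refl
    · obtain ⟨G', hb, hlt, hG'⟩ := step_exists hd hn G hG hT
      have hsub : (⊤ : SimpleGraph (Fin n)).edgeSet \ G'.edgeSet ⊂
          (⊤ : SimpleGraph (Fin n)).edgeSet \ G.edgeSet := by
        constructor
        · intro e he
          exact ⟨he.1, fun hc => he.2 (edgeSet_mono hlt.le hc)⟩
        · intro hsub'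
          obtain ⟨e, he', heG⟩ := Set.exists_of_ssubset
            (edgeSet_strict_mono hlt)
          exact (hsub' ⟨edgeSet_mono le_top he', heG⟩).2 he'
      have hlt' : ((⊤ : SimpleGraph (Fin n)).edgeSet \ G'.edgeSet).ncard < k := by
        rw [← hk]
        exact Set.ncard_lt_ncard hsub (Set.toFinite _)
      exact Relation.ReflTransGen.head hb (ih _ hlt' G' rfl hG')

lemma wit_weaklySat (hd : d + 2 ≤ w) (hn : w < n) :
    WeaklySat (Fvd (w+1) (d+1)) (Wit w d n) :=
  reach_top hd hn _ _ rfl le_rfl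

instance witDec : DecidableRel (Wit w d n).Adj := fun i j =>
  inferInstanceAs (Decidable (i ≠ j ∧ (((i:ℕ) < w ∧ (j:ℕ) < w) ∨ (i:ℕ) < d ∨ (j:ℕ) < d)))

lemma card_val_lt (c : ℕ) (h : c < n) :
    (Finset.univ.filter (fun j : Fin n => (j:ℕ) < c)).card = c := by
  have : (Finset.univ.filter (fun j : Fin n => (j:ℕ) < c)) = Finset.Iio (⟨c, h⟩ : Fin n) := by
    ext j
    simp [Fin.lt_def]
  rw [this, Fin.card_Iio]

lemma wit_degree_lo (i : Fin n) (hi : (i:ℕ) < d) (hdw : d ≤ w) (hn : w < n) :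
    (Wit w d n).degree i = n - 1 := by
  rw [← SimpleGraph.card_neighborFinset_eq_degree, neighborFinset_eq_filter]
  have : Finset.univ.filter ((Wit w d n).Adj i) = Finset.univ.erase i := by
    ext j
    simp only [Finset.mem_filter, Finset.mem_erase, Finset.mem_univ, and_true, true_and]
    constructor
    · intro h; exact (Ne.symm h.1)
    · intro h; exact ⟨Ne.symm h, Or.inr (Or.inl hi)⟩
  rw [this, Finset.card_erase_of_mem (Finset.mem_univ i), Finset.card_univ, Fintype.card_fin]

lemma wit_degree_mid (i : Fin n) (hi1 : d ≤ (i:ℕ)) (hi2 : (i:ℕ) < w) (hdw : d ≤ w) (hn : w < n) :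
    (Wit w d n).degree i = w - 1 := by
  rw [← SimpleGraph.card_neighborFinset_eq_degree, neighborFinset_eq_filter]
  have : Finset.univ.filter ((Wit w d n).Adj i) =
      (Finset.univ.filter (fun j : Fin n => (j:ℕ) < w)).erase i := by
    ext j
    simp only [Finset.mem_filter, Finset.mem_erase, Finset.mem_univ, and_true, true_and]
    constructor
    · rintro ⟨hne, hc⟩
      refine ⟨Ne.symm hne, ?_⟩
      rcases hc with ⟨_, hj⟩ | hj | hj <;> omega
    · rintro ⟨hne, hj⟩
      exact ⟨Ne.symm hne, Or.inl ⟨hi2, hj⟩⟩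
  rw [this, Finset.card_erase_of_mem, card_val_lt w (by omega)]
  simp only [Finset.mem_filter, Finset.mem_univ, true_and]
  exact hi2

lemma wit_degree_hi (i : Fin n) (hi : w ≤ (i:ℕ)) (hdw : d < w) (hn : w < n) :
    (Wit w d n).degree i = d := by
  rw [← SimpleGraph.card_neighborFinset_eq_degree, neighborFinset_eq_filter]
  have : Finset.univ.filter ((Wit w d n).Adj i) =
      Finset.univ.filter (fun j : Fin n => (j:ℕ) < d) := by
    ext j
    simp only [Finset.mem_filter, Finset.mem_univ, true_and]
    constructor
    · rintro ⟨hne, hc⟩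
      rcases hc with ⟨hj, _⟩ | hj | hj <;> omega
    · intro hj
      refine ⟨?_, Or.inr (Or.inr hj)⟩
      intro h
      have := congrArg Fin.val h
      omega
  rw [this, card_val_lt d (by omega)]

lemma wit_ncard (hd : d + 2 ≤ w) (hn : w < n) :
    (Wit w d n).edgeSet.ncard = Nat.choose w 2 + (n - w) * d := by
  classical
  have hsum : ∑ i : Fin n, (Wit w d n).degree i = 2 * (Wit w d n).edgeFinset.card :=
    SimpleGraph.sum_degrees_eq_twice_card_edges _
  have hS : ∑ i : Fin n, (Wit w d n).degree i
      = d * (n-1) + (w - d) * (w-1) + (n - w) * d := by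
    rw [← Finset.sum_filter_add_sum_filter_not Finset.univ (fun i : Fin n => (i:ℕ) < w)]
    rw [← Finset.sum_filter_add_sum_filter_not
      (Finset.univ.filter (fun i : Fin n => (i:ℕ) < w)) (fun i : Fin n => (i:ℕ) < d)]
    have e1 : ((Finset.univ.filter (fun i : Fin n => (i:ℕ) < w)).filter
        (fun i : Fin n => (i:ℕ) < d)) = Finset.univ.filter (fun i : Fin n => (i:ℕ) < d) := by
      ext i
      simp only [Finset.mem_filter, Finset.mem_univ, true_and]
      omega
    have c1 : ((Finset.univ.filter (fun i : Fin n => (i:ℕ) < w)).filter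
        (fun i : Fin n => (i:ℕ) < d)).card = d := by
      rw [e1, card_val_lt d (by omega)]
    have c0 : (Finset.univ.filter (fun i : Fin n => (i:ℕ) < w)).card = w :=
      card_val_lt w hn
    have c2 : ((Finset.univ.filter (fun i : Fin n => (i:ℕ) < w)).filter
        (fun i : Fin n => ¬ (i:ℕ) < d)).card = w - d := by
      have := Finset.card_filter_add_card_filter_not
        (s := Finset.univ.filter (fun i : Fin n => (i:ℕ) < w))
        (p := fun i : Fin n => (i:ℕ) < d)
      omega
    have c3 : (Finset.univ.filter (fun i : Fin n => ¬ (i:ℕ) < w)).card = n - w := by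
      have := Finset.card_filter_add_card_filter_not
        (s := (Finset.univ : Finset (Fin n)))
        (p := fun i : Fin n => (i:ℕ) < w)
      rw [Finset.card_univ, Fintype.card_fin] at this
      omega
    have s1 : ∑ i ∈ ((Finset.univ.filter (fun i : Fin n => (i:ℕ) < w)).filter
        (fun i : Fin n => (i:ℕ) < d)), (Wit w d n).degree i = d * (n-1) := by
      rw [Finset.sum_congr rfl (fun i hi => ?_), Finset.sum_const, c1, smul_eq_mul]
      simp only [Finset.mem_filter] at hi
      exact wit_degree_lo i hi.2 (by omega) hn
    have s2 : ∑ i ∈ ((Finset.univ.filter (fun i : Fin n => (i:ℕ) < w)).filter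
        (fun i : Fin n => ¬ (i:ℕ) < d)), (Wit w d n).degree i = (w - d) * (w-1) := by
      rw [Finset.sum_congr rfl (fun i hi => ?_), Finset.sum_const, c2, smul_eq_mul]
      simp only [Finset.mem_filter, Finset.mem_univ, true_and] at hi
      exact wit_degree_mid i (by omega) hi.1 (by omega) hn
    have s3 : ∑ i ∈ (Finset.univ.filter (fun i : Fin n => ¬ (i:ℕ) < w)),
        (Wit w d n).degree i = (n - w) * d := by
      rw [Finset.sum_congr rfl (fun i hi => ?_), Finset.sum_const, c3, smul_eq_mul]
      simp only [Finset.mem_filter, Finset.mem_univ, true_and] at hi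
      exact wit_degree_hi i (by omega) (by omega) hn
    rw [s1, s2, s3]
  have harr : d * (n-1) + (w - d) * (w-1) + (n - w) * d
      = 2 * (Nat.choose w 2 + (n - w) * d) := by
    obtain ⟨a, rfl⟩ : ∃ a, w = d + 2 + a := ⟨w - (d+2), by omega⟩
    obtain ⟨b, rfl⟩ : ∃ b, n = (d+2+a) + 1 + b := ⟨n - (d+2+a) - 1, by omega⟩
    rw [Nat.choose_two_right]
    have e1 : (d+2+a) + 1 + b - 1 = d+2+a+b := by omega
    have e2 : (d+2+a) - d = 2+a := by omega
    have e3 : (d+2+a) - 1 = d+1+a := by omega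
    have e4 : (d+2+a) + 1 + b - (d+2+a) = 1+b := by omega
    rw [e1, e2, e3, e4]
    have hev : 2 ∣ (d+2+a) * (d+1+a) := by
      have h := Nat.even_mul_succ_self (d+1+a)
      have : (d+1+a) * (d+1+a+1) = (d+2+a) * (d+1+a) := by ring
      rw [this] at h
      exact h.two_dvd
    have hx : 2 * ((d+2+a) * (d+1+a) / 2 + (1+b) * d)
        = (d+2+a) * (d+1+a) + 2 * ((1+b) * d) := by
      rw [Nat.mul_add, Nat.mul_div_cancel' hev]
    rw [hx]
    ring
  have hfin : (Wit w d n).edgeSet.ncard = (Wit w d n).edgeFinset.card := by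
    rw [← SimpleGraph.coe_edgeFinset, Set.ncard_coe_finset]
  rw [hfin]
  have : 2 * (Wit w d n).edgeFinset.card = 2 * (Nat.choose w 2 + (n - w) * d) := by
    rw [← hsum, hS, harr]
  omega

end steps

section lagrange
variable {n d : ℕ}

lemma lagrange_zero (t : Fin n → ℚ) (ht : Function.Injective t)
    (S : Finset (Fin n)) (hS : S.card ≤ d + 1) (lam : Fin n → ℚ)
    (h : ∀ k, k ≤ d → ∑ s ∈ S, lam s * (t s)^k = 0) :
    ∀ s ∈ S, lam s = 0 := by
  intro s0 hs0
  set f : Polynomial ℚ := ∏ r ∈ S.erase s0, (X - C (t r)) with hf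
  have hdeg : f.natDegree ≤ d := by
    have h1 : f.natDegree = ∑ r ∈ S.erase s0, (X - C (t r)).natDegree :=
      Polynomial.natDegree_prod _ _ (fun r _ => X_sub_C_ne_zero (t r))
    have h2 : ∀ r ∈ S.erase s0, (X - C (t r)).natDegree = 1 :=
      fun r _ => natDegree_X_sub_C (t r)
    rw [h1, Finset.sum_congr rfl h2, Finset.sum_const, smul_eq_mul, mul_one]
    have := Finset.card_erase_of_mem hs0
    omega
  have heval : ∀ s : Fin n, f.eval (t s) = ∑ k ∈ Finset.range (d+1), f.coeff k * (t s)^k := by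
    intro s
    exact Polynomial.eval_eq_sum_range' (by omega) (t s)
  have hL : ∑ s ∈ S, lam s * f.eval (t s) = 0 := by
    calc ∑ s ∈ S, lam s * f.eval (t s)
        = ∑ s ∈ S, ∑ k ∈ Finset.range (d+1), f.coeff k * (lam s * (t s)^k) := by
          refine Finset.sum_congr rfl (fun s _ => ?_)
          rw [heval s, Finset.mul_sum]
          exact Finset.sum_congr rfl (fun k _ => by ring)
      _ = ∑ k ∈ Finset.range (d+1), f.coeff k * (∑ s ∈ S, lam s * (t s)^k) := by
          rw [Finset.sum_comm]
          exact Finset.sum_congr rfl (fun k _ => by rw [Finset.mul_sum])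
      _ = 0 := by
          refine Finset.sum_eq_zero (fun k hk => ?_)
          rw [h k (by simp at hk; omega), mul_zero]
  have hvan : ∀ r ∈ S, r ≠ s0 → f.eval (t r) = 0 := by
    intro r hr hne
    rw [hf, Polynomial.eval_prod]
    refine Finset.prod_eq_zero (Finset.mem_erase.mpr ⟨hne, hr⟩) ?_
    simp
  have hsingle : ∑ s ∈ S, lam s * f.eval (t s) = lam s0 * f.eval (t s0) := by
    refine Finset.sum_eq_single s0 (fun r hr hne => ?_) (fun h => absurd hs0 h)
    rw [hvan r hr hne, mul_zero]
  have hne : f.eval (t s0) ≠ 0 := by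
    rw [hf, Polynomial.eval_prod]
    refine Finset.prod_ne_zero_iff.mpr (fun r hr => ?_)
    have : r ≠ s0 := (Finset.mem_erase.mp hr).1
    simp only [eval_sub, eval_X, eval_C, sub_ne_zero]
    exact fun hc => this (ht hc.symm)
  have := hsingle ▸ hL
  exact (mul_eq_zero.mp this).resolve_right hne

lemma local_indep (t : Fin n → ℚ) (ht : Function.Injective t)
    (p : Fin n) (Q : Finset (Fin n)) (hp : p ∉ Q) (hQ : Q.card ≤ d)
    (c : Fin n → ℚ)
    (h : ∀ k, 1 ≤ k → k ≤ d → ∑ q ∈ Q, c q * ((t q)^k - (t p)^k) = 0) :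
    ∀ q ∈ Q, c q = 0 := by
  classical
  set lam : Fin n → ℚ := fun s => if s = p then - ∑ q ∈ Q, c q else c s with hlam
  have key : ∀ s ∈ insert p Q, lam s = 0 := by
    refine lagrange_zero (d := d) t ht (insert p Q) ?_ lam ?_
    · rw [Finset.card_insert_of_notMem hp]; omega
    · intro k hk
      rw [Finset.sum_insert hp]
      have h1 : lam p = - ∑ q ∈ Q, c q := by simp [hlam]
      have h2 : ∀ q ∈ Q, lam q = c q := by
        intro q hq
        have : q ≠ p := fun hc => hp (hc ▸ hq)
        simp [hlam, this]
      have h3 : ∑ q ∈ Q, lam q * (t q)^k = ∑ q ∈ Q, c q * (t q)^k :=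
        Finset.sum_congr rfl (fun q hq => by rw [h2 q hq])
      rw [h1, h3]
      rcases Nat.eq_zero_or_pos k with hk0 | hk1
      · subst hk0
        simp only [pow_zero, mul_one]
        ring
      · have := h k hk1 hk
        have expand : ∑ q ∈ Q, c q * ((t q)^k - (t p)^k)
            = ∑ q ∈ Q, c q * (t q)^k - (∑ q ∈ Q, c q) * (t p)^k := by
          rw [Finset.sum_mul, ← Finset.sum_sub_distrib]
          exact Finset.sum_congr rfl (fun q _ => by ring)
        rw [expand] at this
        linarith [this]
  intro q hq
  have hqp : q ≠ p := fun hc => hp (hc ▸ hq)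
  have := key q (Finset.mem_insert_of_mem hq)
  rw [hlam] at this
  simpa [hqp] using this

end lagrange

section stress
variable {n d : ℕ}

lemma stress_exists (t : Fin n → ℚ) (ht : Function.Injective t)
    (S : Finset (Fin n)) (hS : S.card = d + 2) :
    ∃ lam : Fin n → ℚ, (∀ s ∈ S, lam s ≠ 0) ∧ (∀ k, k ≤ d → ∑ s ∈ S, lam s * (t s)^k = 0) := by
  classical
  -- the d+2 moment vectors are dependent in ℚ^(d+1)
  have hni : ¬ LinearIndependent ℚ (fun s : {x // x ∈ S} => (fun k : Fin (d+1) => (t s.1)^(k:ℕ))) := by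
    intro hli
    have hcard := hli.fintype_card_le_finrank
    rw [Fintype.card_coe, hS] at hcard
    have : Module.finrank ℚ (Fin (d+1) → ℚ) = d + 1 := by
      rw [Module.finrank_pi]
      simp
    omega
  rw [Fintype.not_linearIndependent_iff] at hni
  obtain ⟨g, hg0, i0, hi0⟩ := hni
  set lam : Fin n → ℚ := fun s => if h : s ∈ S then g ⟨s, h⟩ else 0 with hlam
  have hcond : ∀ k, k ≤ d → ∑ s ∈ S, lam s * (t s)^k = 0 := by
    intro k hk
    have := congrFun hg0 ⟨k, by omega⟩
    simp only [Finset.sum_apply, Pi.smul_apply, smul_eq_mul, Pi.zero_apply] at this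
    rw [← this]
    rw [← Finset.sum_attach S (fun s => lam s * (t s)^k)]
    refine Finset.sum_congr rfl (fun s _ => ?_)
    have : lam s.1 = g s := by
      rw [hlam]; simp [s.2]
    rw [this]
  refine ⟨lam, ?_, hcond⟩
  -- full support
  by_contra hsupp
  push_neg at hsupp
  obtain ⟨s1, hs1, hz⟩ := hsupp
  have hzero : ∀ s ∈ S.erase s1, lam s = 0 := by
    refine lagrange_zero (d := d) t ht (S.erase s1) ?_ lam ?_
    · rw [Finset.card_erase_of_mem hs1]; omega
    · intro k hk
      have := hcond k hk
      rwa [← Finset.add_sum_erase S _ hs1, hz, zero_mul, zero_add] at this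
  apply hi0
  have : lam i0.1 = g i0 := by rw [hlam]; simp [i0.2]
  rw [← this]
  by_cases h : i0.1 = s1
  · rw [h]; exact hz
  · exact hzero i0.1 (Finset.mem_erase.mpr ⟨h, i0.2⟩)

end stress

section certificate
variable (d n : ℕ)

def tQ : Fin n → ℚ := fun i => (i : ℕ) + 1

lemma tQ_inj : Function.Injective (tQ n) := by
  intro a b h
  have : ((a:ℕ) : ℚ) = ((b:ℕ) : ℚ) := by
    have := h
    unfold tQ at this
    push_cast at this ⊢
    linarith
  exact Fin.ext (Nat.cast_injective this)

def xQ : Fin n → Fin d → ℚ := fun i k => (tQ n i)^((k:ℕ)+1)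

def Wo (a b : Fin n) : Fin n → Fin d → ℚ := fun s k =>
  (if s = a then xQ d n a k - xQ d n b k else 0) +
  (if s = b then xQ d n b k - xQ d n a k else 0)

lemma Wo_symm (a b : Fin n) : Wo d n a b = Wo d n b a := by
  funext s k
  unfold Wo
  exact add_comm _ _

lemma Wo_self (a : Fin n) : Wo d n a a = 0 := by
  funext s k
  unfold Wo
  simp

def WS : Sym2 (Fin n) → (Fin n → Fin d → ℚ) :=
  Sym2.lift ⟨Wo d n, fun a b => Wo_symm d n a b⟩

@[simp] lemma WS_mk (a b : Fin n) : WS d n s(a, b) = Wo d n a b := rfl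

lemma stress_sum (S : Finset (Fin n)) (lam : Fin n → ℚ)
    (hcond : ∀ k, k ≤ d → ∑ s ∈ S, lam s * (tQ n s)^k = 0) :
    ∑ rs ∈ S ×ˢ S, (lam rs.1 * lam rs.2) • Wo d n rs.1 rs.2 = 0 := by
  funext a k
  rw [Finset.sum_apply, Finset.sum_apply]
  simp only [Pi.smul_apply, smul_eq_mul, Pi.zero_apply]
  have hsplit : ∀ rs : Fin n × Fin n,
      lam rs.1 * lam rs.2 * Wo d n rs.1 rs.2 a k
      = lam rs.1 * lam rs.2 * (if a = rs.1 then xQ d n rs.1 k - xQ d n rs.2 k else 0)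
      + lam rs.1 * lam rs.2 * (if a = rs.2 then xQ d n rs.2 k - xQ d n rs.1 k else 0) := by
    intro rs
    unfold Wo
    ring
  rw [Finset.sum_congr rfl (fun rs _ => hsplit rs), Finset.sum_add_distrib]
  have hx0 : ∑ s ∈ S, lam s * xQ d n s k = 0 := by
    have := hcond ((k:ℕ)+1) (by omega)
    unfold xQ
    exact this
  have hl0 : ∑ s ∈ S, lam s = 0 := by
    have := hcond 0 (by omega)
    simpa using this
  have h1 : ∑ rs ∈ S ×ˢ S, lam rs.1 * lam rs.2 *
      (if a = rs.1 then xQ d n rs.1 k - xQ d n rs.2 k else 0) = 0 := by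
    rw [Finset.sum_product]
    have : ∀ r ∈ S, ∑ s ∈ S, lam r * lam s *
        (if a = r then xQ d n r k - xQ d n s k else 0)
        = if a = r then lam r * (∑ s ∈ S, lam s * (xQ d n r k - xQ d n s k)) else 0 := by
      intro r _
      by_cases h : a = r
      · simp only [h, if_true, Finset.mul_sum]
        exact Finset.sum_congr rfl (fun s _ => by ring)
      · simp [h]
    rw [Finset.sum_congr rfl this]
    by_cases ha : a ∈ S
    · rw [Finset.sum_ite_eq S a (fun r => lam r * (∑ s ∈ S, lam s * (xQ d n r k - xQ d n s k)))]
      simp only [ha, if_true]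
      have : ∑ s ∈ S, lam s * (xQ d n a k - xQ d n s k)
          = (∑ s ∈ S, lam s) * xQ d n a k - ∑ s ∈ S, lam s * xQ d n s k := by
        rw [Finset.sum_mul, ← Finset.sum_sub_distrib]
        exact Finset.sum_congr rfl (fun s _ => by ring)
      rw [this, hl0, hx0]
      ring
    · rw [Finset.sum_ite_eq S a (fun r => lam r * (∑ s ∈ S, lam s * (xQ d n r k - xQ d n s k)))]
      simp [ha]
  have h2 : ∑ rs ∈ S ×ˢ S, lam rs.1 * lam rs.2 *
      (if a = rs.2 then xQ d n rs.2 k - xQ d n rs.1 k else 0) = 0 := by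
    rw [Finset.sum_product_right]
    have : ∀ s ∈ S, ∑ r ∈ S, lam r * lam s *
        (if a = s then xQ d n s k - xQ d n r k else 0)
        = if a = s then lam s * (∑ r ∈ S, lam r * (xQ d n s k - xQ d n r k)) else 0 := by
      intro s _
      by_cases h : a = s
      · simp only [h, if_true, Finset.mul_sum]
        exact Finset.sum_congr rfl (fun r _ => by ring)
      · simp [h]
    rw [Finset.sum_congr rfl this]
    by_cases ha : a ∈ S
    · rw [Finset.sum_ite_eq S a (fun s => lam s * (∑ r ∈ S, lam r * (xQ d n s k - xQ d n r k)))]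
      simp only [ha, if_true]
      have : ∑ r ∈ S, lam r * (xQ d n a k - xQ d n r k)
          = (∑ r ∈ S, lam r) * xQ d n a k - ∑ r ∈ S, lam r * xQ d n r k := by
        rw [Finset.sum_mul, ← Finset.sum_sub_distrib]
        exact Finset.sum_congr rfl (fun r _ => by ring)
      rw [this, hl0, hx0]
      ring
    · rw [Finset.sum_ite_eq S a (fun s => lam s * (∑ r ∈ S, lam r * (xQ d n s k - xQ d n r k)))]
      simp [ha]
  rw [h1, h2, add_zero]

lemma key_span (S : Finset (Fin n)) (hS : S.card = d + 2)
    (p q : Fin n) (hp : p ∈ S) (hq : q ∈ S) (hpq : p ≠ q)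
    (E : Set (Sym2 (Fin n)))
    (hE : ∀ a b : Fin n, a ∈ S → b ∈ S → a ≠ b → s(a, b) ≠ s(p, q) → s(a, b) ∈ E) :
    WS d n s(p, q) ∈ Submodule.span ℚ (WS d n '' E) := by
  classical
  obtain ⟨lam, hsupp, hcond⟩ := stress_exists (d := d) (tQ n) (tQ_inj n) S hS
  have hzero := stress_sum d n S lam hcond
  -- split off the (p,q) and (q,p) terms
  have hpq' : (p, q) ∈ S ×ˢ S := Finset.mem_product.mpr ⟨hp, hq⟩
  have hqp' : (q, p) ∈ (S ×ˢ S).erase (p, q) := by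
    refine Finset.mem_erase.mpr ⟨?_, Finset.mem_product.mpr ⟨hq, hp⟩⟩
    simp [Prod.ext_iff]
    intro h; exact absurd h.symm hpq
  set T := ((S ×ˢ S).erase (p, q)).erase (q, p) with hT
  have hsum : ∑ rs ∈ S ×ˢ S, (lam rs.1 * lam rs.2) • Wo d n rs.1 rs.2
      = (lam p * lam q) • Wo d n p q + ((lam q * lam p) • Wo d n q p
        + ∑ rs ∈ T, (lam rs.1 * lam rs.2) • Wo d n rs.1 rs.2) := by
    rw [← Finset.add_sum_erase _ _ hpq', ← Finset.add_sum_erase _ _ hqp']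
  rw [hsum] at hzero
  have h2 : (2 * (lam p * lam q)) • Wo d n p q
      = - ∑ rs ∈ T, (lam rs.1 * lam rs.2) • Wo d n rs.1 rs.2 := by
    rw [Wo_symm d n q p] at hzero
    have : (lam p * lam q) • Wo d n p q + ((lam q * lam p) • Wo d n p q
        + ∑ rs ∈ T, (lam rs.1 * lam rs.2) • Wo d n rs.1 rs.2)
        = (2 * (lam p * lam q)) • Wo d n p q
          + ∑ rs ∈ T, (lam rs.1 * lam rs.2) • Wo d n rs.1 rs.2 := by
      rw [← add_assoc, ← add_smul]
      ring_nf
    rw [this] at hzero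
    exact eq_neg_of_add_eq_zero_left hzero
  have hmem : ∑ rs ∈ T, (lam rs.1 * lam rs.2) • Wo d n rs.1 rs.2
      ∈ Submodule.span ℚ (WS d n '' E) := by
    refine Submodule.sum_mem _ (fun rs hrs => ?_)
    obtain ⟨hrs1, hrs2⟩ := Finset.mem_erase.mp hrs
    obtain ⟨hrs3, hrs4⟩ := Finset.mem_erase.mp hrs2
    have hr : rs.1 ∈ S := (Finset.mem_product.mp hrs4).1
    have hs : rs.2 ∈ S := (Finset.mem_product.mp hrs4).2
    by_cases hdiag : rs.1 = rs.2
    · rw [hdiag, Wo_self, smul_zero]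
      exact Submodule.zero_mem _
    · have hneq : s(rs.1, rs.2) ≠ s(p, q) := by
        intro hcontra
        rcases Sym2.eq_iff.mp hcontra with ⟨h1, h2⟩ | ⟨h1, h2⟩
        · exact hrs3 (Prod.ext h1 h2)
        · exact hrs1 (Prod.ext h1 h2)
      refine Submodule.smul_mem _ _ (Submodule.subset_span ?_)
      exact ⟨s(rs.1, rs.2), hE rs.1 rs.2 hr hs hdiag hneq, rfl⟩
  have hcoef : (2 * (lam p * lam q)) ≠ 0 := by
    have h1 := hsupp p hp
    have h2 := hsupp q hq
    have : lam p * lam q ≠ 0 := mul_ne_zero h1 h2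
    exact mul_ne_zero two_ne_zero this
  have : (2 * (lam p * lam q)) • Wo d n p q ∈ Submodule.span ℚ (WS d n '' E) := by
    rw [h2]
    exact Submodule.neg_mem _ hmem
  have := (Submodule.smul_mem_iff _ hcoef).mp this
  simpa using this

end certificate

section fvdfacts

variable {w d : ℕ}

lemma card_val_lt' {m : ℕ} (c : ℕ) (h : c < m) :
    (Finset.univ.filter (fun j : Fin m => (j:ℕ) < c)).card = c := by
  have : (Finset.univ.filter (fun j : Fin m => (j:ℕ) < c)) = Finset.Iio (⟨c, h⟩ : Fin m) := by
    ext j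
    simp [Fin.lt_def]
  rw [this, Fin.card_Iio]

lemma Fvd_clique (hd : d + 2 ≤ w) (u₀ w₀ : Fin (w+1))
    (hadj : (Fvd (w+1) (d+1)).Adj u₀ w₀) :
    ∃ A : Finset (Fin (w+1)), A.card = d + 2 ∧ u₀ ∈ A ∧ w₀ ∈ A ∧
      (∀ a ∈ A, ∀ b ∈ A, a ≠ b → (Fvd (w+1) (d+1)).Adj a b) := by
  classical
  obtain ⟨hne, hcase⟩ := hadj
  by_cases h0 : (u₀:ℕ) ≠ 0 ∧ (w₀:ℕ) ≠ 0
  · -- take d+2 nonzero vertices containing u₀, w₀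
    set N := Finset.univ.filter (fun a : Fin (w+1) => (a:ℕ) ≠ 0) with hN
    have hcardN : N.card = w := by
      have h1 := Finset.card_filter_add_card_filter_not
        (s := (Finset.univ : Finset (Fin (w+1)))) (p := fun a : Fin (w+1) => (a:ℕ) ≠ 0)
      have h2 : (Finset.univ.filter (fun a : Fin (w+1) => ¬ (a:ℕ) ≠ 0)).card = 1 := by
        have : (Finset.univ.filter (fun a : Fin (w+1) => ¬ (a:ℕ) ≠ 0))
            = Finset.univ.filter (fun a : Fin (w+1) => (a:ℕ) < 1) := by
          ext a
          simp only [Finset.mem_filter, Finset.mem_univ, true_and, not_not]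
          omega
        rw [this, card_val_lt' 1 (by omega)]
      rw [Finset.card_univ, Fintype.card_fin] at h1
      rw [hN]
      omega
    have hsub : {u₀, w₀} ⊆ N := by
      intro a ha
      rcases Finset.mem_insert.mp ha with h | h
      · subst h; simp [hN, h0.1]; exact fun h => h0.1 (by simp [h])
      · rw [Finset.mem_singleton.mp h]; simp [hN, h0.2]; exact fun h => h0.2 (by simp [h])
    have hc2 : ({u₀, w₀} : Finset (Fin (w+1))).card = 2 := by
      rw [Finset.card_insert_of_notMem (by simp [hne]), Finset.card_singleton]
    have hNc : d + ({u₀, w₀} : Finset (Fin (w+1))).card ≤ N.card := by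
      rw [hc2, hcardN]; omega
    obtain ⟨A, hA1, hA2, hA3⟩ := Finset.exists_subsuperset_card_eq hsub (by omega) hNc
    refine ⟨A, by rw [hA3, hc2], hA1 (by simp), hA1 (by simp), ?_⟩
    intro a ha b hb hab
    have ha' : (a:ℕ) ≠ 0 := by
      have := hA2 ha
      simp [hN] at this
      exact fun h => this (Fin.ext (by simpa using h))
    have hb' : (b:ℕ) ≠ 0 := by
      have := hA2 hb
      simp [hN] at this
      exact fun h => this (Fin.ext (by simpa using h))
    exact ⟨hab, Or.inl ⟨ha', hb'⟩⟩
  · -- one of them is the centre; take {0,...,d+1}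
    set A := Finset.univ.filter (fun a : Fin (w+1) => (a:ℕ) < d + 2) with hA
    have hcardA : A.card = d + 2 := card_val_lt' (d+2) (by omega)
    have hmem : ∀ a : Fin (w+1), (a:ℕ) ≤ d + 1 → a ∈ A := by
      intro a ha
      simp only [hA, Finset.mem_filter, Finset.mem_univ, true_and]
      omega
    have hboth : (u₀:ℕ) ≤ d + 1 ∧ (w₀:ℕ) ≤ d + 1 := by
      push_neg at h0
      rcases hcase with ⟨h1, h2⟩ | h
      · exact absurd (h0 h1) h2
      · exact h
    refine ⟨A, hcardA, hmem u₀ hboth.1, hmem w₀ hboth.2, ?_⟩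
    intro a ha b hb hab
    have ha' : (a:ℕ) < d + 2 := by
      have := ha; simp only [hA, Finset.mem_filter, Finset.mem_univ, true_and] at this
      exact this
    have hb' : (b:ℕ) < d + 2 := by
      have := hb; simp only [hA, Finset.mem_filter, Finset.mem_univ, true_and] at this
      exact this
    exact ⟨hab, Or.inr ⟨by omega, by omega⟩⟩

end fvdfacts

section fvdcount
variable {w d : ℕ}
open SimpleGraph

instance fvdDec {v δ : ℕ} : DecidableRel (Fvd v δ).Adj := fun a b =>
  inferInstanceAs (Decidable (a ≠ b ∧ (((a:ℕ) ≠ 0 ∧ (b:ℕ) ≠ 0) ∨ ((a:ℕ) ≤ δ ∧ (b:ℕ) ≤ δ))))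

lemma fvd_degree0 (hd : d + 2 ≤ w) (a : Fin (w+1)) (ha : (a:ℕ) = 0) :
    (Fvd (w+1) (d+1)).degree a = d + 1 := by
  rw [← SimpleGraph.card_neighborFinset_eq_degree, neighborFinset_eq_filter]
  have : Finset.univ.filter ((Fvd (w+1) (d+1)).Adj a)
      = (Finset.univ.filter (fun b : Fin (w+1) => (b:ℕ) < d + 2)).erase a := by
    ext b
    simp only [Finset.mem_filter, Finset.mem_erase, Finset.mem_univ, true_and, and_true]
    constructor
    · rintro ⟨hne, hc⟩
      refine ⟨Ne.symm hne, ?_⟩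
      rcases hc with ⟨h1, _⟩ | ⟨_, h2⟩
      · exact absurd ha h1
      · omega
    · rintro ⟨hne, hb⟩
      have hbv : (b:ℕ) ≠ 0 := by
        intro hc
        exact hne (Fin.ext (by omega))
      exact ⟨Ne.symm hne, Or.inr ⟨by omega, by omega⟩⟩
  rw [this, Finset.card_erase_of_mem, card_val_lt' (d+2) (by omega)]
  · omega
  · simp only [Finset.mem_filter, Finset.mem_univ, true_and]
    omega

lemma fvd_degree_mid (hd : d + 2 ≤ w) (a : Fin (w+1)) (ha1 : 1 ≤ (a:ℕ)) (ha2 : (a:ℕ) ≤ d+1) :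
    (Fvd (w+1) (d+1)).degree a = w := by
  rw [← SimpleGraph.card_neighborFinset_eq_degree, neighborFinset_eq_filter]
  have : Finset.univ.filter ((Fvd (w+1) (d+1)).Adj a) = Finset.univ.erase a := by
    ext b
    simp only [Finset.mem_filter, Finset.mem_erase, Finset.mem_univ, true_and, and_true]
    constructor
    · rintro ⟨hne, _⟩
      exact Ne.symm hne
    · intro hne
      refine ⟨Ne.symm hne, ?_⟩
      by_cases hb : (b:ℕ) = 0
      · exact Or.inr ⟨ha2, by omega⟩
      · exact Or.inl ⟨by omega, hb⟩
  rw [this, Finset.card_erase_of_mem (Finset.mem_univ a), Finset.card_univ, Fintype.card_fin]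
  omega

lemma fvd_degree_hi (hd : d + 2 ≤ w) (a : Fin (w+1)) (ha : d + 2 ≤ (a:ℕ)) :
    (Fvd (w+1) (d+1)).degree a = w - 1 := by
  rw [← SimpleGraph.card_neighborFinset_eq_degree, neighborFinset_eq_filter]
  have : Finset.univ.filter ((Fvd (w+1) (d+1)).Adj a)
      = (Finset.univ.filter (fun b : Fin (w+1) => (b:ℕ) ≠ 0)).erase a := by
    ext b
    simp only [Finset.mem_filter, Finset.mem_erase, Finset.mem_univ, true_and]
    constructor
    · rintro ⟨hne, hc⟩
      refine ⟨Ne.symm hne, ?_⟩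
      rcases hc with ⟨_, h2⟩ | ⟨h1, _⟩
      · exact h2
      · omega
    · rintro ⟨hne, hb⟩
      exact ⟨Ne.symm hne, Or.inl ⟨by omega, hb⟩⟩
  rw [this, Finset.card_erase_of_mem]
  · have : (Finset.univ.filter (fun b : Fin (w+1) => (b:ℕ) ≠ 0)).card = w := by
      have h1 := Finset.card_filter_add_card_filter_not
        (s := (Finset.univ : Finset (Fin (w+1)))) (p := fun b : Fin (w+1) => (b:ℕ) ≠ 0)
      have h2 : (Finset.univ.filter (fun b : Fin (w+1) => ¬ (b:ℕ) ≠ 0)).card = 1 := by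
        have he : (Finset.univ.filter (fun b : Fin (w+1) => ¬ (b:ℕ) ≠ 0))
            = Finset.univ.filter (fun b : Fin (w+1) => (b:ℕ) < 1) := by
          ext b
          simp only [Finset.mem_filter, Finset.mem_univ, true_and, not_not]
          omega
        rw [he, card_val_lt' 1 (by omega)]
      rw [Finset.card_univ, Fintype.card_fin] at h1
      omega
    rw [this]
  · simp only [Finset.mem_filter, Finset.mem_univ, true_and]
    omega

lemma fvd_ncard (hd : d + 2 ≤ w) :
    (Fvd (w+1) (d+1)).edgeSet.ncard = Nat.choose w 2 + (d + 1) := by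
  classical
  have hsum : ∑ a : Fin (w+1), (Fvd (w+1) (d+1)).degree a
      = 2 * (Fvd (w+1) (d+1)).edgeFinset.card :=
    SimpleGraph.sum_degrees_eq_twice_card_edges _
  have hS : ∑ a : Fin (w+1), (Fvd (w+1) (d+1)).degree a
      = (d+1) + (d+1) * w + (w - d - 1) * (w - 1) := by
    rw [← Finset.sum_filter_add_sum_filter_not Finset.univ (fun a : Fin (w+1) => (a:ℕ) < d + 2)]
    rw [← Finset.sum_filter_add_sum_filter_not
      (Finset.univ.filter (fun a : Fin (w+1) => (a:ℕ) < d + 2)) (fun a : Fin (w+1) => (a:ℕ) = 0)]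
    have e1 : ((Finset.univ.filter (fun a : Fin (w+1) => (a:ℕ) < d+2)).filter
        (fun a : Fin (w+1) => (a:ℕ) = 0)) = Finset.univ.filter (fun a : Fin (w+1) => (a:ℕ) < 1) := by
      ext a
      simp only [Finset.mem_filter, Finset.mem_univ, true_and]
      omega
    have c1 : ((Finset.univ.filter (fun a : Fin (w+1) => (a:ℕ) < d+2)).filter
        (fun a : Fin (w+1) => (a:ℕ) = 0)).card = 1 := by
      rw [e1, card_val_lt' 1 (by omega)]
    have c0 : (Finset.univ.filter (fun a : Fin (w+1) => (a:ℕ) < d+2)).card = d + 2 :=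
      card_val_lt' (d+2) (by omega)
    have c2 : ((Finset.univ.filter (fun a : Fin (w+1) => (a:ℕ) < d+2)).filter
        (fun a : Fin (w+1) => ¬ (a:ℕ) = 0)).card = d + 1 := by
      have := Finset.card_filter_add_card_filter_not
        (s := Finset.univ.filter (fun a : Fin (w+1) => (a:ℕ) < d+2))
        (p := fun a : Fin (w+1) => (a:ℕ) = 0)
      omega
    have c3 : (Finset.univ.filter (fun a : Fin (w+1) => ¬ (a:ℕ) < d+2)).card = w - d - 1 := by
      have := Finset.card_filter_add_card_filter_not
        (s := (Finset.univ : Finset (Fin (w+1))))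
        (p := fun a : Fin (w+1) => (a:ℕ) < d+2)
      rw [Finset.card_univ, Fintype.card_fin] at this
      omega
    have s1 : ∑ a ∈ ((Finset.univ.filter (fun a : Fin (w+1) => (a:ℕ) < d+2)).filter
        (fun a : Fin (w+1) => (a:ℕ) = 0)), (Fvd (w+1) (d+1)).degree a = (d+1) := by
      rw [Finset.sum_congr rfl (fun a ha => ?_), Finset.sum_const, c1, smul_eq_mul, one_mul]
      simp only [Finset.mem_filter] at ha
      exact fvd_degree0 hd a ha.2
    have s2 : ∑ a ∈ ((Finset.univ.filter (fun a : Fin (w+1) => (a:ℕ) < d+2)).filter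
        (fun a : Fin (w+1) => ¬ (a:ℕ) = 0)), (Fvd (w+1) (d+1)).degree a = (d+1) * w := by
      rw [Finset.sum_congr rfl (fun a ha => ?_), Finset.sum_const, c2, smul_eq_mul]
      simp only [Finset.mem_filter, Finset.mem_univ, true_and] at ha
      exact fvd_degree_mid hd a (by omega) (by omega)
    have s3 : ∑ a ∈ (Finset.univ.filter (fun a : Fin (w+1) => ¬ (a:ℕ) < d+2)),
        (Fvd (w+1) (d+1)).degree a = (w - d - 1) * (w - 1) := by
      rw [Finset.sum_congr rfl (fun a ha => ?_), Finset.sum_const, c3, smul_eq_mul]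
      simp only [Finset.mem_filter, Finset.mem_univ, true_and] at ha
      exact fvd_degree_hi hd a (by omega)
    rw [s1, s2, s3]
  have harr : (d+1) + (d+1) * w + (w - d - 1) * (w - 1)
      = 2 * (Nat.choose w 2 + (d + 1)) := by
    obtain ⟨a, rfl⟩ : ∃ a, w = d + 2 + a := ⟨w - (d+2), by omega⟩
    rw [Nat.choose_two_right]
    have e2 : (d+2+a) - d - 1 = 1 + a := by omega
    have e3 : (d+2+a) - 1 = d+1+a := by omega
    rw [e2, e3]
    have hev : 2 ∣ (d+2+a) * (d+1+a) := by
      have h := Nat.even_mul_succ_self (d+1+a)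
      have he : (d+1+a) * (d+1+a+1) = (d+2+a) * (d+1+a) := by ring
      rw [he] at h
      exact h.two_dvd
    have hx : 2 * ((d+2+a) * (d+1+a) / 2 + (d+1)) = (d+2+a) * (d+1+a) + 2 * (d+1) := by
      rw [Nat.mul_add, Nat.mul_div_cancel' hev]
    rw [hx]
    ring
  have hfin : (Fvd (w+1) (d+1)).edgeSet.ncard = (Fvd (w+1) (d+1)).edgeFinset.card := by
    rw [← SimpleGraph.coe_edgeFinset, Set.ncard_coe_finset]
  rw [hfin]
  omega

end fvdcount

section spaninv
open SimpleGraph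
variable {w d n : ℕ}

lemma span_bootstep (hd : d + 2 ≤ w) (G G' : SimpleGraph (Fin n))
    (hstep : BootStep (Fvd (w+1) (d+1)) G G') :
    Submodule.span ℚ (WS d n '' G'.edgeSet) = Submodule.span ℚ (WS d n '' G.edgeSet) := by
  classical
  obtain ⟨x, y, hxy, hnadj, hG', φ, hinj, u₀, w₀, hadj, hφu, hφw⟩ := hstep
  have hEs : G'.edgeSet = insert s(x, y) G.edgeSet := by
    rw [hG', SimpleGraph.edgeSet_sup, SimpleGraph.edgeSet_fromEdgeSet]
    rw [Set.union_comm]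
    congr 1
    ext e
    simp only [Set.mem_diff, Set.mem_singleton_iff, Set.mem_setOf_eq]
    constructor
    · rintro ⟨rfl, _⟩; rfl
    · rintro rfl
      exact ⟨rfl, by simp [hxy]⟩
  obtain ⟨A, hcardA, huA, hwA, hclique⟩ := Fvd_clique hd u₀ w₀ hadj
  have hnew : WS d n s(x, y) ∈ Submodule.span ℚ (WS d n '' G.edgeSet) := by
    refine key_span d n (A.image φ) ?_ x y ?_ ?_ hxy G.edgeSet ?_
    · rw [Finset.card_image_of_injective _ hinj, hcardA]
    · exact Finset.mem_image.mpr ⟨u₀, huA, hφu⟩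
    · exact Finset.mem_image.mpr ⟨w₀, hwA, hφw⟩
    · intro a b ha hb hab hne
      obtain ⟨a₀, ha₀, rfl⟩ := Finset.mem_image.mp ha
      obtain ⟨b₀, hb₀, rfl⟩ := Finset.mem_image.mp hb
      have hab₀ : a₀ ≠ b₀ := fun h => hab (h ▸ rfl)
      have hGadj : G'.Adj (φ a₀) (φ b₀) := φ.map_adj (hclique a₀ ha₀ b₀ hb₀ hab₀)
      have : s(φ a₀, φ b₀) ∈ G'.edgeSet := hGadj
      rw [hEs] at this
      rcases Set.mem_insert_iff.mp this with h | h
      · exact absurd h hne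
      · exact h
  rw [hEs, Set.image_insert_eq, Submodule.span_insert_eq_span hnew]

lemma span_weaklySat (hd : d + 2 ≤ w) (H : SimpleGraph (Fin n))
    (hws : Relation.ReflTransGen (BootStep (Fvd (w+1) (d+1))) H ⊤) :
    Submodule.span ℚ (WS d n '' H.edgeSet)
      = Submodule.span ℚ (WS d n '' (⊤ : SimpleGraph (Fin n)).edgeSet) := by
  induction hws using Relation.ReflTransGen.head_induction_on with
  | refl => rfl
  | head hstep _ ih =>
    rw [← ih]
    exact (span_bootstep hd _ _ hstep).symm

end spaninv

section outside
open SimpleGraph Submodule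
variable {w d n : ℕ}

lemma outside_bound (hd : d + 2 ≤ w) (hn : w + 1 ≤ n)
    (S₁ : Finset (Fin n)) (hS₁ : S₁.card = w + 1)
    (H : SimpleGraph (Fin n))
    (hspan : Submodule.span ℚ (WS d n '' H.edgeSet)
      = Submodule.span ℚ (WS d n '' (⊤ : SimpleGraph (Fin n)).edgeSet)) :
    d * (n - (w + 1)) ≤ (H.edgeSet \ {e : Sym2 (Fin n) | ∀ a ∈ e, a ∈ S₁}).ncard := by
  classical
  set Ψ : (Fin n → Fin d → ℚ) →ₗ[ℚ] ({a : Fin n // a ∉ S₁} → Fin d → ℚ) :=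
    LinearMap.funLeft ℚ (Fin d → ℚ) (fun a : {a : Fin n // a ∉ S₁} => a.1) with hΨ
  have psi_kill : ∀ e : Sym2 (Fin n), (∀ a ∈ e, a ∈ S₁) → Ψ (WS d n e) = 0 := by
    intro e he
    induction e with
    | _ a b =>
      have ha : a ∈ S₁ := he a (Sym2.mem_mk_left a b)
      have hb : b ∈ S₁ := he b (Sym2.mem_mk_right a b)
      funext s k
      have hsa : s.1 ≠ a := fun h => s.2 (h ▸ ha)
      have hsb : s.1 ≠ b := fun h => s.2 (h ▸ hb)
      show Wo d n a b s.1 k = 0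
      unfold Wo
      rw [if_neg hsa, if_neg hsb, add_zero]
  obtain ⟨B, hBsub, hBcard⟩ := Finset.exists_subset_card_eq (s := S₁) (n := d) (by omega)
  set v : {a : Fin n // a ∉ S₁} × {b // b ∈ B} → ({a : Fin n // a ∉ S₁} → Fin d → ℚ) :=
    fun p => Ψ (Wo d n p.1.1 p.2.1) with hv
  have hli : LinearIndependent ℚ v := by
    rw [Fintype.linearIndependent_iff]
    intro g hg
    rintro ⟨a, b⟩
    -- coefficients as a function on Fin n
    set cc : Fin n → ℚ := fun s => if h : s ∈ B then g (a, ⟨s, h⟩) else 0 with hcc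
    have key : ∀ q ∈ B, cc q = 0 := by
      refine local_indep (d := d) (tQ n) (tQ_inj n) a.1 B ?_ (le_of_eq hBcard) cc ?_
      · exact fun h => a.2 (hBsub h)
      · intro k hk1 hk2
        set k' : Fin d := ⟨k - 1, by omega⟩ with hk'
        have hkk : (k':ℕ) + 1 = k := by simp [hk']; omega
        have := congrFun (congrFun hg a) k'
        simp only [Finset.sum_apply, Pi.smul_apply, smul_eq_mul, Pi.zero_apply] at this
        rw [Fintype.sum_prod_type] at this
        have heval : ∀ (a' : {a : Fin n // a ∉ S₁}) (b' : {b // b ∈ B}),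
            v (a', b') a k' = if a' = a then xQ d n a.1 k' - xQ d n b'.1 k' else 0 := by
          intro a' b'
          show Wo d n a'.1 b'.1 a.1 k' = _
          unfold Wo
          have h2 : a.1 ≠ b'.1 := fun h => a.2 (hBsub (h ▸ b'.2))
          rw [if_neg h2, add_zero]
          by_cases h : a' = a
          · subst h
            rw [if_pos rfl, if_pos rfl]
          · rw [if_neg (fun hc => h (Subtype.ext hc.symm)), if_neg h]
        have hsum : ∑ a' : {a : Fin n // a ∉ S₁}, ∑ b' : {b // b ∈ B},
            g (a', b') * v (a', b') a k'
            = ∑ b' : {b // b ∈ B}, g (a, b') * (xQ d n a.1 k' - xQ d n b'.1 k') := by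
          rw [Finset.sum_eq_single a]
          · refine Finset.sum_congr rfl (fun b' _ => ?_)
            rw [heval a b', if_pos rfl]
          · intro a' _ hne
            refine Finset.sum_eq_zero (fun b' _ => ?_)
            rw [heval a' b', if_neg hne, mul_zero]
          · intro h
            exact absurd (Finset.mem_univ a) h
        rw [hsum] at this
        -- convert subtype sum to Finset sum
        have hconv : ∑ b' : {b // b ∈ B}, g (a, b') * (xQ d n a.1 k' - xQ d n b'.1 k')
            = ∑ q ∈ B, cc q * (xQ d n a.1 k' - xQ d n q k') := by
          rw [← Finset.sum_attach B (fun q => cc q * (xQ d n a.1 k' - xQ d n q k'))]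
          refine Finset.sum_congr rfl (fun b' _ => ?_)
          congr 1
          rw [hcc]
          simp [b'.2]
        rw [hconv] at this
        have : ∑ q ∈ B, cc q * ((tQ n q)^k - (tQ n a.1)^k)
            = - ∑ q ∈ B, cc q * (xQ d n a.1 k' - xQ d n q k') := by
          rw [← Finset.sum_neg_distrib]
          refine Finset.sum_congr rfl (fun q _ => ?_)
          unfold xQ
          rw [hkk]
          ring
        rw [this]
        simpa using congrArg Neg.neg ‹∑ q ∈ B, cc q * (xQ d n a.1 k' - xQ d n q k') = 0›
    have := key b.1 b.2
    rw [hcc] at this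
    simpa [b.2] using this
  have hcard : Fintype.card ({a : Fin n // a ∉ S₁} × {b // b ∈ B}) = (n - (w+1)) * d := by
    rw [Fintype.card_prod, Fintype.card_coe, hBcard]
    congr 1
    rw [Fintype.card_subtype]
    have h1 := Finset.card_filter_add_card_filter_not
      (s := (Finset.univ : Finset (Fin n))) (p := fun a : Fin n => a ∉ S₁)
    have h2 : (Finset.univ.filter (fun a : Fin n => ¬ a ∉ S₁)).card = S₁.card := by
      congr 1
      ext a
      simp
    rw [Finset.card_univ, Fintype.card_fin] at h1
    omega
  have hrank : Module.finrank ℚ (Submodule.span ℚ (Set.range v)) = (n - (w+1)) * d := by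
    rw [finrank_span_eq_card hli, hcard]
  -- range v lies in the span of projected edge vectors of H, away from S₁-internal edges
  have hsub : Submodule.span ℚ (Set.range v)
      ≤ Submodule.span ℚ ((fun e => Ψ (WS d n e)) ''
          (H.edgeSet \ {e : Sym2 (Fin n) | ∀ a ∈ e, a ∈ S₁})) := by
    have step1 : Submodule.span ℚ (Set.range v)
        ≤ Submodule.map Ψ (Submodule.span ℚ (WS d n '' (⊤ : SimpleGraph (Fin n)).edgeSet)) := by
      rw [Submodule.span_le]
      rintro z ⟨⟨a, b⟩, rfl⟩
      refine Submodule.mem_map_of_mem (Submodule.subset_span ?_)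
      refine ⟨s(a.1, b.1), ?_, rfl⟩
      rw [SimpleGraph.mem_edgeSet, SimpleGraph.top_adj]
      exact fun h => a.2 (hBsub (h ▸ b.2))
    have step2 : Submodule.map Ψ (Submodule.span ℚ (WS d n '' (⊤ : SimpleGraph (Fin n)).edgeSet))
        = Submodule.span ℚ ((fun e => Ψ (WS d n e)) '' H.edgeSet) := by
      rw [← hspan, Submodule.map_span, Set.image_image]
    have step3 : Submodule.span ℚ ((fun e => Ψ (WS d n e)) '' H.edgeSet)
        ≤ Submodule.span ℚ ((fun e => Ψ (WS d n e)) ''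
            (H.edgeSet \ {e : Sym2 (Fin n) | ∀ a ∈ e, a ∈ S₁})) := by
      rw [Submodule.span_le]
      rintro z ⟨e, he, rfl⟩
      by_cases hi : ∀ a ∈ e, a ∈ S₁
      · show Ψ (WS d n e) ∈ _
        rw [psi_kill e hi]
        exact Submodule.zero_mem _
      · exact Submodule.subset_span ⟨e, ⟨he, hi⟩, rfl⟩
    exact step1.trans (step2 ▸ step3)
  have hfin : Module.finrank ℚ (Submodule.span ℚ ((fun e => Ψ (WS d n e)) ''
      (H.edgeSet \ {e : Sym2 (Fin n) | ∀ a ∈ e, a ∈ S₁})))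
      ≤ (H.edgeSet \ {e : Sym2 (Fin n) | ∀ a ∈ e, a ∈ S₁}).ncard := by
    have hfin1 : (H.edgeSet \ {e : Sym2 (Fin n) | ∀ a ∈ e, a ∈ S₁}).Finite := Set.toFinite _
    have hfin2 : ((fun e => Ψ (WS d n e)) ''
        (H.edgeSet \ {e : Sym2 (Fin n) | ∀ a ∈ e, a ∈ S₁})).Finite := hfin1.image _
    calc Module.finrank ℚ (Submodule.span ℚ ((fun e => Ψ (WS d n e)) ''
        (H.edgeSet \ {e : Sym2 (Fin n) | ∀ a ∈ e, a ∈ S₁})))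
        ≤ ((fun e => Ψ (WS d n e)) ''
            (H.edgeSet \ {e : Sym2 (Fin n) | ∀ a ∈ e, a ∈ S₁})).ncard := by
          have := finrank_span_le_card (R := ℚ)
            ((fun e => Ψ (WS d n e)) ''
              (H.edgeSet \ {e : Sym2 (Fin n) | ∀ a ∈ e, a ∈ S₁}))
          rwa [← Set.ncard_eq_toFinset_card'] at this
      _ ≤ _ := Set.ncard_image_le hfin1
  have hmono := Submodule.finrank_mono hsub
  rw [Nat.mul_comm] at hrank
  omega
end outside

section insidebound
open SimpleGraph
variable {w d n : ℕ}

lemma inside_of_copy (hd : d + 2 ≤ w) (H : SimpleGraph (Fin n))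
    (ψ : Fin (w+1) → Fin n) (hinj : Function.Injective ψ) (excl : Sym2 (Fin n))
    (himg : ∀ e ∈ (Fvd (w+1) (d+1)).edgeSet, Sym2.map ψ e ≠ excl → Sym2.map ψ e ∈ H.edgeSet) :
    ∃ S₁ : Finset (Fin n), S₁.card = w + 1 ∧
      Nat.choose w 2 + d ≤ (H.edgeSet ∩ {e : Sym2 (Fin n) | ∀ a ∈ e, a ∈ S₁}).ncard := by
  classical
  set S₁ : Finset (Fin n) := Finset.image ψ Finset.univ with hS₁
  have hcard : S₁.card = w + 1 := by
    rw [hS₁, Finset.card_image_of_injective _ hinj, Finset.card_univ, Fintype.card_fin]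
  set A : Set (Sym2 (Fin n)) := Sym2.map ψ '' (Fvd (w+1) (d+1)).edgeSet with hA
  have hAcard : A.ncard = Nat.choose w 2 + (d + 1) := by
    rw [hA, Set.ncard_image_of_injective _ (Sym2.map.injective hinj), fvd_ncard hd]
  have hsub : A \ {excl} ⊆ H.edgeSet ∩ {e : Sym2 (Fin n) | ∀ a ∈ e, a ∈ S₁} := by
    rintro e ⟨⟨e₀, he₀, rfl⟩, hne⟩
    refine ⟨himg e₀ he₀ hne, ?_⟩
    intro a ha
    obtain ⟨b, _, rfl⟩ := Sym2.mem_map.mp ha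
    exact Finset.mem_image.mpr ⟨b, Finset.mem_univ b, rfl⟩
  refine ⟨S₁, hcard, ?_⟩
  have h1 : A.ncard ≤ (A \ {excl}).ncard + 1 := by
    have : A ⊆ (A \ {excl}) ∪ {excl} := by
      intro e he
      by_cases h : e = excl
      · exact Or.inr (h ▸ rfl)
      · exact Or.inl ⟨he, h⟩
    calc A.ncard ≤ ((A \ {excl}) ∪ {excl}).ncard :=
          Set.ncard_le_ncard this (Set.toFinite _)
      _ ≤ (A \ {excl}).ncard + ({excl} : Set (Sym2 (Fin n))).ncard :=
          Set.ncard_union_le _ _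
      _ = (A \ {excl}).ncard + 1 := by rw [Set.ncard_singleton]
  have h2 : (A \ {excl}).ncard
      ≤ (H.edgeSet ∩ {e : Sym2 (Fin n) | ∀ a ∈ e, a ∈ S₁}).ncard :=
    Set.ncard_le_ncard hsub (Set.toFinite _)
  omega

lemma inside_bound (hd : d + 2 ≤ w) (hn : w + 1 ≤ n) (H : SimpleGraph (Fin n))
    (hws : Relation.ReflTransGen (BootStep (Fvd (w+1) (d+1))) H ⊤) :
    ∃ S₁ : Finset (Fin n), S₁.card = w + 1 ∧
      Nat.choose w 2 + d ≤ (H.edgeSet ∩ {e : Sym2 (Fin n) | ∀ a ∈ e, a ∈ S₁}).ncard := by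
  rcases Relation.ReflTransGen.cases_head hws with hT | ⟨G', hstep, _⟩
  · -- H = ⊤
    subst hT
    set ψ : Fin (w+1) → Fin n := Fin.castLE hn with hψ
    have hinj : Function.Injective ψ := Fin.castLE_injective hn
    refine inside_of_copy hd ⊤ ψ hinj (s(ψ 0, ψ 0)) ?_
    intro e he _
    induction e with
    | _ a b =>
      rw [Sym2.map_pair_eq, SimpleGraph.mem_edgeSet, SimpleGraph.top_adj]
      have : a ≠ b := ((Fvd (w+1) (d+1)).mem_edgeSet.mp he).1
      exact fun h => this (hinj h)
  · obtain ⟨x, y, hxy, hnadj, hG', φ, hinj, u₀, w₀, hadj, hφu, hφw⟩ := hstep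
    subst hG'
    refine inside_of_copy hd H φ hinj (s(x, y)) ?_
    intro e he hne
    have hmem : Sym2.map φ e ∈ (H ⊔ SimpleGraph.fromEdgeSet {s(x, y)}).edgeSet :=
      SimpleGraph.Hom.map_mem_edgeSet φ he
    rw [SimpleGraph.edgeSet_sup, SimpleGraph.edgeSet_fromEdgeSet] at hmem
    rcases hmem with h | h
    · exact h
    · exact absurd h.1 hne

lemma wsat_lower_aux (hd : d + 2 ≤ w) (hn : w + 1 ≤ n) (H : SimpleGraph (Fin n))
    (hws : Relation.ReflTransGen (BootStep (Fvd (w+1) (d+1))) H ⊤) :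
    Nat.choose w 2 + (n - w) * d ≤ H.edgeSet.ncard := by
  obtain ⟨S₁, hS₁card, hin⟩ := inside_bound hd hn H hws
  have hout := outside_bound hd hn S₁ hS₁card H (span_weaklySat hd H hws)
  have hsplit : (H.edgeSet ∩ {e : Sym2 (Fin n) | ∀ a ∈ e, a ∈ S₁}).ncard
      + (H.edgeSet \ {e : Sym2 (Fin n) | ∀ a ∈ e, a ∈ S₁}).ncard = H.edgeSet.ncard :=
    Set.ncard_inter_add_ncard_diff_eq_ncard _ _ (Set.toFinite _)
  obtain ⟨m, hm⟩ : ∃ m, n = w + 1 + m := ⟨n - (w+1), by omega⟩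
  subst hm
  have e1 : w + 1 + m - w = m + 1 := by omega
  have e2 : w + 1 + m - (w + 1) = m := by omega
  rw [e1] at *
  rw [e2] at hout
  have e3 : (m + 1) * d = d * m + d := by ring
  omega

end insidebound

end WsatFvdAux

/-- **conjecture of Faudree, Gould and Jacobson.** For all `v ≥ 3`,
`1 ≤ δ ≤ v − 2` and `n ≥ v`, `wsat(n, F_{v,δ}) = C(v−1,2) + (n − v + 1)(δ − 1)`. -/
theorem wsat_Fvd (v δ : ℕ) (hv : 3 ≤ v) (hδ1 : 1 ≤ δ) (hδ : δ ≤ v - 2)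
    (n : ℕ) (hn : v ≤ n) :
    wsat (Fvd v δ) n = Nat.choose (v - 1) 2 + (n - v + 1) * (δ - 1) := by
  obtain ⟨w, rfl⟩ : ∃ w, v = w + 1 := ⟨v - 1, by omega⟩
  obtain ⟨d, rfl⟩ : ∃ d, δ = d + 1 := ⟨δ - 1, by omega⟩
  have hd : d + 2 ≤ w := by omega
  have hwn : w < n := by omega
  have hne : { m | ∃ H : SimpleGraph (Fin n), WeaklySat (Fvd (w+1) (d+1)) H ∧
      H.edgeSet.ncard = m }.Nonempty :=
    ⟨(⊤ : SimpleGraph (Fin n)).edgeSet.ncard, ⊤, Relation.ReflTransGen.refl, rfl⟩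
  have hgoal_eq : Nat.choose (w + 1 - 1) 2 + (n - (w + 1) + 1) * (d + 1 - 1)
      = Nat.choose w 2 + (n - w) * d := by
    have e1 : w + 1 - 1 = w := by omega
    have e2 : n - (w + 1) + 1 = n - w := by omega
    have e3 : d + 1 - 1 = d := by omega
    rw [e1, e2, e3]
  rw [hgoal_eq]
  unfold wsat
  refine le_antisymm ?_ ?_
  · exact Nat.sInf_le ⟨Wit w d n, wit_weaklySat hd hwn, wit_ncard hd hwn⟩
  · obtain ⟨H, hws, hcard⟩ := Nat.sInf_mem hne
    rw [← hcard]
    exact wsat_lower_aux hd (by omega) H hws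
end
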